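/- arXiv:1908.07361 — 7 statements merged into one kernel-verified Lean document; each statement's English description precedes it below -/
import Mathlib

section
/- Let d be a rational prime. Then for every integer m ≥ 2, the Misiurewicz polynomial G_{d,m,1}(c) is irreducible over ℚ. -/
open Polynomial

noncomputable section

/-- `critPoly d i` is `f_{c,d}^i(0)` as a polynomial in the variable `c` over `ℤ`,
where `f_{c,d}(x) = x^d + c`. -/
def critPoly (d : ℕ) : ℕ → Polynomial ℤ
  | 0 => 0
  | i + 1 => critPoly d i ^ d + X

/-- The field of rational functions in `c` over `ℚ`, realized as the fraction field of `ℤ[c]`. -/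
abbrev RF : Type := FractionRing (Polynomial ℤ)

/-- The natural inclusion `ℤ[c] → ℚ(c)`. -/
def toRF (p : Polynomial ℤ) : RF := algebraMap (Polynomial ℤ) RF p

/-- `G_{d,0,n} = ∏_{k ∣ n} (f_{c,d}^k(0))^{μ(n/k)}` as a rational function. -/
def G0Rat (d n : ℕ) : RF :=
  ∏ k ∈ n.divisors, toRF (critPoly d k) ^ (ArithmeticFunction.moebius (n / k))

/-- `F_{d,m,n}` as a rational function. -/
def FRat (d m n : ℕ) : RF :=
  ∏ k ∈ n.divisors,
    ((toRF (critPoly d (m + k)) - toRF (critPoly d m)) /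
      (toRF (critPoly d (m - 1 + k)) - toRF (critPoly d (m - 1)))) ^
      (ArithmeticFunction.moebius (n / k))

/-- `G_{d,m,n}` (for `m ≥ 2`) as a rational function. -/
def GRat (d m n : ℕ) : RF :=
  if n ∣ m - 1 then FRat d m n / FRat d 1 n else FRat d m n

/-- `G : ℤ[c]` is the Misiurewicz polynomial `G_{d,m,n}` (for `m ≥ 2`). -/
def IsMisiurewicz (d m n : ℕ) (G : Polynomial ℤ) : Prop := toRF G = GRat d m n

/-- `G0 : ℤ[c]` is the polynomial `G_{d,0,n}`. -/
def IsG0 (d n : ℕ) (G0 : Polynomial ℤ) : Prop := toRF G0 = G0Rat d n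

lemma critPoly_succ (d i : ℕ) : critPoly d (i+1) = critPoly d i ^ d + X := rfl

lemma critPoly_one {d : ℕ} (hd : d ≠ 0) : critPoly d 1 = X := by
  rw [critPoly_succ]; simp [critPoly, zero_pow hd]

lemma X_dvd_critPoly {d : ℕ} (hd : d ≠ 0) (i : ℕ) : X ∣ critPoly d i := by
  induction i with
  | zero => simp [critPoly]
  | succ i ih =>
    rw [critPoly_succ]
    exact dvd_add (ih.trans (dvd_pow_self _ hd)) dvd_rfl

lemma Xsq_dvd_critPoly_sub_X {d : ℕ} (hd : 2 ≤ d) (i : ℕ) :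
    X ^ 2 ∣ critPoly d (i+1) - X := by
  rw [critPoly_succ, add_sub_cancel_right]
  exact (pow_dvd_pow X hd).trans (pow_dvd_pow_of_dvd (X_dvd_critPoly (by omega) i) d)

lemma critPoly_monic {d : ℕ} (hd : 2 ≤ d) (i : ℕ) :
    (critPoly d (i+1)).Monic ∧ (critPoly d (i+1)).natDegree = d ^ i := by
  induction i with
  | zero => simp [critPoly_one (show d ≠ 0 by omega), monic_X]
  | succ i ih =>
    rw [critPoly_succ]
    have hmon : (critPoly d (i+1) ^ d).Monic := ih.1.pow d
    have hdeg : (critPoly d (i+1) ^ d).natDegree = d ^ (i+1) := by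
      rw [ih.1.natDegree_pow]; rw [ih.2]; ring
    have hlt : (X : Polynomial ℤ).degree < (critPoly d (i+1) ^ d).degree := by
      rw [degree_eq_natDegree hmon.ne_zero, hdeg, degree_X]
      exact_mod_cast Nat.one_lt_cast.mpr (Nat.one_lt_pow (by omega) (by omega))
    refine ⟨hmon.add_of_left hlt, ?_⟩
    rw [natDegree_eq_of_degree_eq (degree_add_eq_left_of_degree_lt hlt), hdeg]

lemma map_critPoly_sub {d : ℕ} (hd : d.Prime) (i : ℕ) :
    (critPoly d (i+1) - critPoly d i).map (Int.castRingHom (ZMod d)) = X ^ d ^ i := by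
  haveI : Fact d.Prime := ⟨hd⟩
  induction i with
  | zero => simp [critPoly_one hd.ne_zero, critPoly, hd.ne_zero]
  | succ i ih =>
    have h : critPoly d (i+2) - critPoly d (i+1) = critPoly d (i+1) ^ d - critPoly d i ^ d := by
      rw [critPoly_succ, critPoly_succ]; ring
    rw [h, Polynomial.map_sub, Polynomial.map_pow, Polynomial.map_pow, ← sub_pow_char,
      ← Polynomial.map_sub, ih, ← pow_mul, ← pow_succ]

/-- For a prime `d` and every `m ≥ 2`, `G_{d,m,1}` is irreducible over `ℚ`. -/
theorem misiurewicz_irreducible_period_one (d m : ℕ) (hd : d.Prime) (hm : 2 ≤ m)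
    (G : Polynomial ℤ) (hG : IsMisiurewicz d m 1 G) :
    Irreducible (G.map (Int.castRingHom ℚ)) := by
  haveI : Fact d.Prime := ⟨hd⟩
  have hd2 : 2 ≤ d := hd.two_le
  have hma : m - 1 + 1 = m := by omega
  have hmb : m - 2 + 1 = m - 1 := by omega
  set a : Polynomial ℤ := critPoly d m with ha
  set b : Polynomial ℤ := critPoly d (m-1) with hb
  set S : Polynomial ℤ := ∑ j ∈ Finset.range d, a ^ j * b ^ (d - 1 - j) with hSdef
  have haM : a.Monic := by rw [ha, ← hma]; exact (critPoly_monic hd2 (m-1)).1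
  have haD : a.natDegree = d ^ (m-1) := by rw [ha, ← hma]; exact (critPoly_monic hd2 (m-1)).2
  have hbM : b.Monic := by rw [hb, ← hmb]; exact (critPoly_monic hd2 (m-2)).1
  have hbD : b.natDegree = d ^ (m-2) := by rw [hb, ← hmb]; exact (critPoly_monic hd2 (m-2)).2
  have hdegba : b.degree < a.degree := by
    rw [degree_eq_natDegree haM.ne_zero, degree_eq_natDegree hbM.ne_zero, haD, hbD]
    exact_mod_cast Nat.pow_lt_pow_right hd.one_lt (by omega)
  have habM : (a - b).Monic := haM.sub_of_left hdegba
  have hab0 : a - b ≠ 0 := habM.ne_zero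
  have hgeom : S * (a - b) = a ^ d - b ^ d := geom_sum₂_mul a b d
  have h1 : critPoly d (m+1) = a ^ d + X := critPoly_succ d m
  have h2 : a = b ^ d + X := by rw [ha, ← hma]; exact critPoly_succ d (m-1)
  have hdiff : critPoly d (m+1) - critPoly d m = S * (a - b) := by
    rw [h1, hgeom, ← ha]
    nth_rewrite 2 [h2]
    ring
  -- Fraction field manipulation
  have hinj : Function.Injective (algebraMap (Polynomial ℤ) RF) :=
    IsFractionRing.injective _ _
  have hX0 : toRF X ≠ 0 := (map_ne_zero_iff _ hinj).mpr X_ne_zero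
  have hab0' : toRF a - toRF b ≠ 0 := by
    have h : toRF a - toRF b = toRF (a - b) := by simp [toRF, map_sub]
    rw [h]
    exact (map_ne_zero_iff _ hinj).mpr hab0
  have hG' : toRF G = (toRF (critPoly d (m+1)) - toRF a) / (toRF a - toRF b) /
      ((toRF (critPoly d 2) - toRF (critPoly d 1)) /
        (toRF (critPoly d 1) - toRF (critPoly d 0))) := by
    have h := hG
    simp only [IsMisiurewicz, GRat, FRat, if_pos (one_dvd (m-1)), Nat.divisors_one,
      Finset.prod_singleton, Nat.div_self Nat.one_pos, ArithmeticFunction.moebius_apply_one,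
      zpow_one, hma, ← ha, ← hb] at h
    convert h using 4 <;> norm_num
  have e1 : toRF (critPoly d (m+1)) - toRF a = toRF S * (toRF a - toRF b) := by
    simp only [toRF, ← map_sub, ← map_mul]
    rw [hdiff]
  have e2 : toRF (critPoly d 2) - toRF (critPoly d 1) = toRF X ^ d := by
    have h : critPoly d 2 - critPoly d 1 = X ^ d := by
      rw [critPoly_succ, critPoly_one (show d ≠ 0 by omega)]; ring
    simp only [toRF, ← map_sub, ← map_pow]
    rw [h]
  have e3 : toRF (critPoly d 1) - toRF (critPoly d 0) = toRF X := by
    simp [toRF, critPoly_one (show d ≠ 0 by omega), critPoly, show d ≠ 0 by omega]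
  obtain ⟨e, he⟩ : ∃ e, d = e + 1 := ⟨d - 1, by omega⟩
  have key : G * X ^ (d-1) = S := by
    apply hinj
    rw [map_mul, map_pow]
    show toRF G * toRF X ^ (d-1) = toRF S
    rw [hG', e1, e2, e3, mul_div_cancel_right₀ _ hab0']
    rw [show d - 1 = e by omega, he, pow_succ, mul_div_cancel_right₀ _ hX0,
      div_mul_cancel₀ _ (pow_ne_zero e hX0)]
  -- S and G are monic
  have hSM : S.Monic := by
    refine habM.of_mul_monic_right ?_
    rw [hgeom]
    refine (haM.pow d).sub_of_left ?_
    rw [degree_eq_natDegree (haM.pow d).ne_zero, degree_eq_natDegree (hbM.pow d).ne_zero,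
      natDegree_pow, natDegree_pow, haD, hbD]
    exact_mod_cast Nat.mul_lt_mul_of_pos_left
      (Nat.pow_lt_pow_right hd.one_lt (by omega)) (show 0 < d by omega)
  have hGM : G.Monic := (monic_X_pow (d-1)).of_mul_monic_right (key ▸ hSM)
  -- constant coefficient is d
  obtain ⟨u, hu⟩ : X ^ 2 ∣ a - X := by
    rw [ha, ← hma]; exact Xsq_dvd_critPoly_sub_X hd2 (m-1)
  obtain ⟨v, hv⟩ : X ^ 2 ∣ b - X := by
    rw [hb, ← hmb]; exact Xsq_dvd_critPoly_sub_X hd2 (m-2)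
  have hau : a = X * (1 + X * u) := by linear_combination hu
  have hbv : b = X * (1 + X * v) := by linear_combination hv
  set T : Polynomial ℤ := ∑ j ∈ Finset.range d, (1 + X * u) ^ j * (1 + X * v) ^ (d - 1 - j)
    with hTdef
  have hST : S = X ^ (d-1) * T := by
    rw [hSdef, hTdef, Finset.mul_sum]
    refine Finset.sum_congr rfl fun j hj => ?_
    have hj' : j < d := Finset.mem_range.mp hj
    rw [hau, hbv, mul_pow, mul_pow, show d - 1 = j + (d - 1 - j) by omega, pow_add]
    ring_nf
    rw [show j + (d - 1 - j) - j = d - 1 - j by omega]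
  have hGT : G = T := by
    have hXp : (X : Polynomial ℤ) ^ (d-1) ≠ 0 := pow_ne_zero _ X_ne_zero
    apply mul_right_cancel₀ hXp
    rw [key, hST]; ring
  have hc0 : G.coeff 0 = (d : ℤ) := by
    rw [hGT]
    have : T.coeff 0 = constantCoeff T := rfl
    rw [this, hTdef, map_sum]
    have : ∀ j ∈ Finset.range d,
        constantCoeff ((1 + X * u) ^ j * (1 + X * v) ^ (d - 1 - j)) = 1 := by
      intro j _
      simp [map_mul, map_pow]
    rw [Finset.sum_congr rfl this]
    simp
  -- reduction mod d
  have hmapab : (a - b).map (Int.castRingHom (ZMod d)) = X ^ d ^ (m-1) := by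
    have := map_critPoly_sub hd (m-1)
    rwa [hma, ← ha, ← hb] at this
  have hmapS : S.map (Int.castRingHom (ZMod d)) = X ^ ((d-1) * d ^ (m-1)) := by
    have hX : (X : Polynomial (ZMod d)) ^ d ^ (m-1) ≠ 0 := pow_ne_zero _ X_ne_zero
    apply mul_right_cancel₀ hX
    have h := congrArg (Polynomial.map (Int.castRingHom (ZMod d))) hgeom
    rw [Polynomial.map_mul, hmapab, Polynomial.map_sub, Polynomial.map_pow, Polynomial.map_pow,
      ← sub_pow_char, ← Polynomial.map_sub, hmapab, ← pow_mul] at h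
    rw [h, ← pow_add]
    congr 1
    rw [he, Nat.add_sub_cancel]
    ring
  have hmapG : G.map (Int.castRingHom (ZMod d)) = X ^ ((d-1) * (d ^ (m-1) - 1)) := by
    have hX : (X : Polynomial (ZMod d)) ^ (d-1) ≠ 0 := pow_ne_zero _ X_ne_zero
    apply mul_right_cancel₀ hX
    have h := congrArg (Polynomial.map (Int.castRingHom (ZMod d))) key
    rw [Polynomial.map_mul, Polynomial.map_pow, map_X, hmapS] at h
    rw [h, ← pow_add]
    congr 1
    have hk : 1 ≤ d ^ (m-1) := Nat.one_le_pow _ _ (by omega)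
    obtain ⟨k, hk2⟩ : ∃ k, d ^ (m-1) = k + 1 := ⟨d ^ (m-1) - 1, by omega⟩
    rw [hk2, Nat.add_sub_cancel]
    ring
  have hdegG : G.natDegree = (d-1) * (d ^ (m-1) - 1) := by
    rw [← hGM.natDegree_map (Int.castRingHom (ZMod d)), hmapG, natDegree_X_pow]
  have hNpos : 0 < G.natDegree := by
    rw [hdegG]
    have h2k : 2 ≤ d ^ (m-1) := le_trans hd2 (Nat.le_self_pow (by omega) d)
    exact Nat.mul_pos (by omega) (by omega)
  -- Eisenstein
  have hEis : G.IsEisensteinAt (Ideal.span {(d : ℤ)}) := by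
    refine ⟨?_, ?_, ?_⟩
    · rw [hGM.leadingCoeff, Ideal.mem_span_singleton]
      intro hdvd
      have := Int.le_of_dvd one_pos hdvd
      have : (2 : ℤ) ≤ d := by exact_mod_cast hd2
      omega
    · intro n hn
      rw [Ideal.mem_span_singleton]
      have hz : (G.map (Int.castRingHom (ZMod d))).coeff n = 0 := by
        rw [hmapG, coeff_X_pow, if_neg]
        rw [hdegG] at hn
        omega
      rw [coeff_map] at hz
      exact (ZMod.intCast_zmod_eq_zero_iff_dvd _ d).mp hz
    · rw [hc0, Ideal.span_singleton_pow, Ideal.mem_span_singleton]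
      intro hdvd
      have h1 := Int.le_of_dvd (by exact_mod_cast hd.pos) hdvd
      have h2 : (2 : ℤ) ≤ d := by exact_mod_cast hd2
      nlinarith
  have hirr : Irreducible G :=
    hEis.irreducible ((Ideal.span_singleton_prime (by exact_mod_cast hd.ne_zero)).mpr
      (Nat.prime_iff_prime_int.mp hd)) hGM.isPrimitive hNpos
  exact (Polynomial.IsPrimitive.Int.irreducible_iff_irreducible_map_cast hGM.isPrimitive).mp hirr
end
end

section
/- For every integer m ≥ 2, the Misiurewicz polynomial G_{2,m,3}(c) is irreducible over ℚ. -/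
open Polynomial

noncomputable section

set_option synthInstance.maxHeartbeats 1000000
set_option maxHeartbeats 1000000

namespace MisAux
abbrev a (i : ℕ) : Polynomial ℤ := critPoly 2 i

lemma a_zero : a 0 = 0 := rfl
lemma a_succ (i : ℕ) : a (i+1) = a i ^ 2 + X := rfl

lemma monic_a : ∀ i : ℕ, (a (i+1)).Monic ∧ (a (i+1)).natDegree = 2 ^ i
  | 0 => by
    constructor
    · show Monic ((0:Polynomial ℤ)^2 + X); simpa using monic_X
    · show ((0:Polynomial ℤ)^2 + X).natDegree = 1; simp
  | (i+1) => by
    obtain ⟨hm, hd⟩ := monic_a i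
    have hmsq : (a (i+1) ^ 2).Monic := hm.pow 2
    have hdsq : (a (i+1) ^ 2).natDegree = 2 ^ (i+1) := by
      rw [natDegree_pow, hd]; ring
    have hlt : degree (X : Polynomial ℤ) < degree (a (i+1) ^ 2) := by
      rw [degree_X, degree_eq_natDegree hmsq.ne_zero, hdsq]
      exact_mod_cast Nat.one_lt_two_pow_iff.mpr (Nat.succ_ne_zero i)
    constructor
    · exact hmsq.add_of_left hlt
    · rw [show a (i+1+1) = a (i+1) ^ 2 + X from rfl, ← hdsq]
      exact natDegree_eq_of_degree_eq (degree_add_eq_left_of_degree_lt hlt)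

lemma a_monic (i : ℕ) : (a (i+1)).Monic := (monic_a i).1
lemma a_deg (i : ℕ) : (a (i+1)).natDegree = 2 ^ i := (monic_a i).2

/-- sum of consecutive-ish iterates is monic -/
lemma add_monic {i j : ℕ} (hij : j ≤ i) : (a (i+1) + a j).Monic := by
  rcases Nat.eq_zero_or_pos j with rfl | hj
  · simpa [a_zero] using a_monic i
  · obtain ⟨j', rfl⟩ := Nat.exists_eq_add_of_lt hj; simp only [zero_add] at *
    apply (a_monic i).add_of_left
    rw [degree_eq_natDegree (a_monic i).ne_zero, degree_eq_natDegree (a_monic j').ne_zero,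
      a_deg, a_deg]
    exact_mod_cast Nat.pow_lt_pow_right one_lt_two (by omega)

lemma add_ne_zero {i j : ℕ} (hij : j ≤ i) : (a (i+1) + a j) ≠ 0 := (add_monic hij).ne_zero

/-- Lemma A : telescoping product for differences of iterates. -/
lemma prodA (k m : ℕ) :
    a (m + k) - a m = a k * ∏ i ∈ Finset.range m, (a (i + k) + a i) := by
  induction m with
  | zero => simp [a_zero]
  | succ m ih =>
    rw [Finset.prod_range_succ, ← mul_assoc, ← ih]
    have h1 : a (m + 1 + k) = a (m + k) ^ 2 + X := by rw [show m+1+k = (m+k)+1 by ring]; rfl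
    rw [h1, a_succ]; ring

-- toRF basics
lemma toRF_injective : Function.Injective toRF := IsFractionRing.injective (Polynomial ℤ) RF
lemma toRF_mul (p q : Polynomial ℤ) : toRF (p * q) = toRF p * toRF q := map_mul _ _ _
lemma toRF_sub (p q : Polynomial ℤ) : toRF (p - q) = toRF p - toRF q := map_sub _ _ _
lemma toRF_ne_zero {p : Polynomial ℤ} (hp : p ≠ 0) : toRF p ≠ 0 := by
  simpa [toRF] using fun h => hp (toRF_injective (by simpa [toRF, map_zero] using h))

lemma divisors_three : (3:ℕ).divisors = {1, 3} := by decide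

lemma moebius_three : ArithmeticFunction.moebius 3 = -1 :=
  ArithmeticFunction.moebius_apply_prime (by norm_num)

/-- unfolded form of `FRat 2 m 3` -/
lemma FRat_eq (m : ℕ) :
    FRat 2 m 3 = ((toRF (a (m+1) - a m)) / (toRF (a (m-1+1) - a (m-1))))⁻¹ *
      ((toRF (a (m+3) - a m)) / (toRF (a (m-1+3) - a (m-1)))) := by
  rw [FRat, divisors_three]
  rw [Finset.prod_insert (by decide), Finset.prod_singleton]
  norm_num [moebius_three, ArithmeticFunction.moebius_apply_one, toRF_sub]

lemma prod_ne_zero (k' m : ℕ) : (∏ i ∈ Finset.range m, (a (i + (k'+1)) + a i)) ≠ 0 := by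
  apply Finset.prod_ne_zero_iff.mpr
  intro i _
  rw [show i + (k'+1) = (i+k') + 1 by ring]
  exact add_ne_zero (by omega)

lemma FRat_eq' (t : ℕ) :
    FRat 2 (t+2) 3 = (toRF (a (t+2) + a (t+1)))⁻¹ * toRF (a (t+4) + a (t+1)) := by
  have hm1 : (t+2) - 1 = t + 1 := rfl
  rw [FRat_eq, hm1]
  have e1 : a (t+2+1) - a (t+2) =
      (a 1 * ∏ i ∈ Finset.range (t+1), (a (i+1) + a i)) * (a (t+2) + a (t+1)) := by
    rw [show t+2+1 = (t+2)+1 by ring, prodA 1 (t+2), Finset.prod_range_succ, ← mul_assoc]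
  have e2 : a (t+1+1) - a (t+1) = a 1 * ∏ i ∈ Finset.range (t+1), (a (i+1) + a i) := by
    rw [show t+1+1 = (t+1)+1 by ring, prodA 1 (t+1)]
  have e3 : a (t+2+3) - a (t+2) =
      (a 3 * ∏ i ∈ Finset.range (t+1), (a (i+3) + a i)) * (a (t+4) + a (t+1)) := by
    rw [show t+2+3 = (t+2)+3 by ring, prodA 3 (t+2), Finset.prod_range_succ, ← mul_assoc]
  have e4 : a (t+1+3) - a (t+1) = a 3 * ∏ i ∈ Finset.range (t+1), (a (i+3) + a i) := by
    rw [show t+1+3 = (t+1)+3 by ring, prodA 3 (t+1)]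
  have h1 : toRF (a 1) * toRF (∏ i ∈ Finset.range (t+1), (a (i+1) + a i)) ≠ 0 := by
    rw [← toRF_mul]; apply toRF_ne_zero; exact mul_ne_zero (a_monic 0).ne_zero (prod_ne_zero 0 (t+1))
  have h3 : toRF (a 3) * toRF (∏ i ∈ Finset.range (t+1), (a (i+3) + a i)) ≠ 0 := by
    rw [← toRF_mul]; apply toRF_ne_zero; exact mul_ne_zero (a_monic 2).ne_zero (prod_ne_zero 2 (t+1))
  rw [e1, e2, e3, e4]
  simp only [toRF_mul]
  rw [mul_div_cancel_left₀ _ h1, mul_div_cancel_left₀ _ h3]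

def K : Polynomial ℤ := X^3 + 2 * X^2 + X + 1

lemma a3_eq : a 3 = X * K := by
  show ((0^2 + X)^2 + X)^2 + X = _
  rw [K]; ring

lemma FRat_one : FRat 2 1 3 = toRF K := by
  rw [FRat_eq]
  have e1 : a (1+1) - a 1 = X * X := by
    show ((0^2+X)^2 + X) - (0^2+X) = X * X; ring
  have e2 : a (1-1+1) - a (1-1) = X := by
    show (0^2+X) - 0 = X; ring
  have e3 : a (1+3) - a 1 = a 3 * a 3 := by
    show (a 3 ^ 2 + X) - (0^2+X) = a 3 * a 3; ring
  have e4 : a (1-1+3) - a (1-1) = a 3 := by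
    show a 3 - 0 = a 3; ring
  have hX : toRF X ≠ 0 := toRF_ne_zero X_ne_zero
  have ha3 : toRF (a 3) ≠ 0 := toRF_ne_zero (a_monic 2).ne_zero
  rw [e1, e2, e3, e4]
  simp only [toRF_mul]
  rw [mul_div_cancel_left₀ _ hX, mul_div_cancel_left₀ _ ha3, a3_eq, toRF_mul,
    inv_mul_cancel_left₀ hX]

-- ## Extraction of polynomial identities from hG

lemma K_monic : K.Monic := by unfold K; monicity!

lemma identity1 (t : ℕ) (G : Polynomial ℤ) (hmis : IsMisiurewicz 2 (t+2) 3 G)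
    (hdvd : ¬ (3 ∣ t + 1)) :
    G * (a (t+2) + a (t+1)) = a (t+4) + a (t+1) := by
  have hG : toRF G = FRat 2 (t+2) 3 := by
    rw [hmis, GRat, if_neg]; simpa using hdvd
  rw [FRat_eq' t] at hG
  have hs : toRF (a (t+2) + a (t+1)) ≠ 0 := toRF_ne_zero (@add_ne_zero (t+1) (t+1) le_rfl)
  apply toRF_injective
  rw [toRF_mul, hG]
  field_simp

lemma identity2 (t : ℕ) (G : Polynomial ℤ) (hmis : IsMisiurewicz 2 (t+2) 3 G)
    (hdvd : 3 ∣ t + 1) :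
    G * (a (t+2) + a (t+1)) * K = a (t+4) + a (t+1) := by
  have hG : toRF G = FRat 2 (t+2) 3 / FRat 2 1 3 := by
    rw [hmis, GRat, if_pos]; simpa using hdvd
  rw [FRat_eq' t, FRat_one] at hG
  have hs : toRF (a (t+2) + a (t+1)) ≠ 0 := toRF_ne_zero (@add_ne_zero (t+1) (t+1) le_rfl)
  have hK : toRF K ≠ 0 := toRF_ne_zero K_monic.ne_zero
  apply toRF_injective
  rw [toRF_mul, toRF_mul, hG]
  field_simp

-- ## Reduction mod 2

abbrev mp (p : Polynomial ℤ) : Polynomial (ZMod 2) := p.map (Int.castRingHom (ZMod 2))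

def phi2 : Polynomial (ZMod 2) := X^3 + X + 1

lemma two_eq_zero : (2 : Polynomial (ZMod 2)) = 0 := by
  rw [← map_ofNat (C : ZMod 2 →+* Polynomial (ZMod 2)) 2, show (2:ZMod 2) = 0 from rfl, map_zero]

lemma mp_sq (j k : ℕ) : mp (a (j+1+k) + a (j+1)) = (mp (a (j+k) + a j))^2 := by
  have key : a (j+1+k) + a (j+1) = (a (j+k) + a j)^2 + 2*(X - a (j+k) * a j) := by
    rw [show j+1+k = (j+k)+1 by ring, a_succ, a_succ]; ring
  rw [key]
  simp only [Polynomial.map_add, Polynomial.map_mul, Polynomial.map_pow, Polynomial.map_sub,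
    Polynomial.map_X, Polynomial.map_ofNat]
  rw [show ((2:Polynomial (ZMod 2)) * _ = 0) from by rw [two_eq_zero]; ring, add_zero]

lemma mp_s : ∀ j : ℕ, mp (a (j+1) + a j) = X ^ (2^j)
  | 0 => by
    show mp (a 1 + 0) = X ^ 1
    rw [add_zero, show a 1 = X from by show (0:Polynomial ℤ)^2 + X = X; ring]
    simp
  | (j+1) => by
    rw [show j+1+1 = j+1+1 from rfl, mp_sq j 1, mp_s j, ← pow_mul, pow_succ]

lemma mp_K : mp K = phi2 := by
  unfold K phi2
  simp only [Polynomial.map_add, Polynomial.map_mul, Polynomial.map_pow, Polynomial.map_X,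
    Polynomial.map_ofNat, Polynomial.map_one]
  rw [two_eq_zero]; ring

lemma mp_T : ∀ j : ℕ, mp (a (j+3) + a j) = (X * phi2) ^ (2^j)
  | 0 => by
    rw [show a (0+3) + a 0 = X * K from by rw [a_zero, add_zero, ← a3_eq]]
    show (X * K).map (Int.castRingHom (ZMod 2)) = _
    rw [Polynomial.map_mul, Polynomial.map_X, show K.map (Int.castRingHom (ZMod 2)) = phi2 from mp_K]
    norm_num
  | (j+1) => by
    rw [show j+1+3 = j+3+1 from rfl, mp_sq j 3, mp_T j, ← pow_mul, pow_succ]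

lemma phi2_monic : phi2.Monic := by unfold phi2; monicity!

lemma phi2_natDegree : phi2.natDegree = 3 := by unfold phi2; compute_degree!

lemma phi2_irreducible : Irreducible phi2 := by
  rw [phi2_monic.irreducible_iff_roots_eq_zero_of_degree_le_three (by rw [phi2_natDegree]; omega)
    (by rw [phi2_natDegree])]
  rw [Multiset.eq_zero_iff_forall_notMem]
  intro r hr
  rw [mem_roots phi2_monic.ne_zero] at hr
  rw [IsRoot.def, phi2] at hr
  simp only [eval_add, eval_pow, eval_X, eval_one] at hr
  revert hr
  revert r; decide

lemma mpG_case1 (t : ℕ) (G : Polynomial ℤ)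
    (h : G * (a (t+2) + a (t+1)) = a (t+4) + a (t+1)) :
    mp G = phi2 ^ (2^(t+1)) := by
  have h2 : mp G * mp (a (t+2) + a (t+1)) = mp (a (t+4) + a (t+1)) := by
    rw [← Polynomial.map_mul, h]
  rw [show t+2 = (t+1)+1 from rfl, mp_s (t+1), show t+4 = (t+1)+3 from rfl, mp_T (t+1),
    mul_pow, mul_comm ((X:Polynomial (ZMod 2)) ^ 2 ^ (t+1))] at h2
  exact mul_right_cancel₀ (pow_ne_zero _ X_ne_zero) h2

lemma mpG_case2 (t : ℕ) (G : Polynomial ℤ)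
    (h : G * (a (t+2) + a (t+1)) * K = a (t+4) + a (t+1)) :
    mp G = phi2 ^ (2^(t+1) - 1) := by
  have h2 : mp G * mp (a (t+2) + a (t+1)) * mp K = mp (a (t+4) + a (t+1)) := by
    rw [← Polynomial.map_mul, ← Polynomial.map_mul, h]
  rw [show t+2 = (t+1)+1 from rfl, mp_s (t+1), show t+4 = (t+1)+3 from rfl, mp_T (t+1),
    mul_pow, mp_K] at h2
  have he : 2^(t+1) = (2^(t+1) - 1) + 1 := by
    have : 1 ≤ 2^(t+1) := Nat.one_le_two_pow
    omega
  have hX : (X : Polynomial (ZMod 2))^(2^(t+1)) ≠ 0 := pow_ne_zero _ X_ne_zero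
  have hphi : phi2 ≠ 0 := phi2_monic.ne_zero
  apply mul_right_cancel₀ hX
  apply mul_right_cancel₀ hphi
  calc mp G * X^(2^(t+1)) * phi2 = mp G * X^(2^(t+1)) * phi2 := rfl
    _ = X ^ (2^(t+1)) * phi2 ^ (2^(t+1)) := h2
    _ = X ^ (2^(t+1)) * (phi2 ^ (2^(t+1) - 1) * phi2) := by rw [← pow_succ, ← he]
    _ = phi2 ^ (2^(t+1) - 1) * X^(2^(t+1)) * phi2 := by ring

-- ## The 2-adic (matrix) computation

abbrev Mat : Type := Matrix (Fin 3) (Fin 3) (ZMod 8)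

def M : Mat := !![0,0,7; 1,0,7; 0,1,0]

def phiInt : Polynomial ℤ := X^3 + X + 1

def ψ : Polynomial ℤ →+* Mat := (Polynomial.aeval M).toRingHom

lemma ψ_X : ψ X = M := by simp [ψ]
lemma ψ_phiInt : ψ phiInt = 0 := by
  have : ψ phiInt = M^3 + M + 1 := by simp [ψ, phiInt]
  rw [this]; decide
lemma ψ_two : ψ 2 = 2 := map_ofNat ψ 2
lemma ψ_eight : ψ 8 = 0 := by
  rw [map_ofNat ψ 8]; decide

def bm : ℕ → Mat
  | 0 => 0
  | i + 1 => bm i ^ 2 + M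

lemma ψ_a : ∀ i : ℕ, ψ (a i) = bm i
  | 0 => by simp [a_zero, bm]
  | (i+1) => by
    rw [a_succ, map_add, map_pow, ψ_X, ψ_a i]; rfl

lemma bm_step : ∀ k : ℕ, bm (k+5) = bm (k+2)
  | 0 => by decide
  | (k+1) => by
    show bm (k+5) ^ 2 + M = bm (k+2) ^ 2 + M
    rw [bm_step k]

lemma bm_per (r : ℕ) : ∀ q : ℕ, bm (2 + r % 3 + 3 * q) = bm (2 + r % 3)
  | 0 => by rw [Nat.mul_zero, Nat.add_zero]
  | (q+1) => by
    rw [show 2 + r % 3 + 3*(q+1) = (2 + r % 3 + 3*q) + 3 by ring]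
    have h := bm_step (r % 3 + 3 * q)
    rw [show r % 3 + 3*q + 5 = 2 + r % 3 + 3 * q + 3 by ring,
      show r % 3 + 3*q + 2 = 2 + r % 3 + 3 * q by ring] at h
    rw [h, bm_per r q]

lemma bm_eq (j : ℕ) (hj : 2 ≤ j) : bm j = bm (2 + (j-2) % 3) := by
  have h := bm_per (j-2) ((j-2)/3)
  rwa [show 2 + (j-2) % 3 + 3 * ((j-2)/3) = j by omega] at h

lemma bm_shift3 (j : ℕ) (hj : 2 ≤ j) : bm (j+3) = bm j := by
  rw [bm_eq (j+3) (by omega), bm_eq j hj, show (j+3-2) % 3 = (j-2) % 3 by omega]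

lemma case1_ne (j : ℕ) (hj : 1 ≤ j) (h3 : ¬ (3 ∣ j)) :
    (2 : Mat) * (bm (j+3) + bm j) ≠ 0 := by
  rcases eq_or_lt_of_le hj with h | h
  · rw [← h]; decide
  · have hj2 : 2 ≤ j := h
    rw [bm_shift3 j hj2, bm_eq j hj2]
    have : (j-2) % 3 = 0 ∨ (j-2) % 3 = 2 := by omega
    rcases this with h | h <;> rw [h] <;> decide

lemma case2_ne (j : ℕ) (h3 : 3 ∣ j) (hj : 1 ≤ j) :
    bm (j+3) + bm j ≠ 0 := by
  have hj2 : 2 ≤ j := by omega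
  rw [bm_shift3 j hj2, bm_eq j hj2]
  have : (j-2) % 3 = 1 := by omega
  rw [this]; decide

-- ## Main irreducibility criterion

lemma mp_phiInt : mp phiInt = phi2 := by
  unfold phiInt phi2
  simp [Polynomial.map_add, Polynomial.map_pow, Polynomial.map_X, Polynomial.map_one]

lemma lift_factor (aa : Polynomial ℤ) (haa : aa.Monic) (hdeg : 1 ≤ aa.natDegree)
    {j : ℕ} (hj : mp aa = phi2 ^ j) :
    ∃ p u : Polynomial ℤ, aa = phiInt * p + 2 * u := by
  have hj1 : 1 ≤ j := by
    by_contra h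
    have : j = 0 := by omega
    rw [this, pow_zero] at hj
    have : aa.natDegree = 0 := by
      rw [← haa.natDegree_map (Int.castRingHom (ZMod 2))]
      show (mp aa).natDegree = 0
      rw [hj, natDegree_one]
    omega
  have hmap0 : mp (aa - phiInt ^ j) = 0 := by
    show (aa - phiInt ^ j).map _ = 0
    rw [Polynomial.map_sub, Polynomial.map_pow,
      show phiInt.map (Int.castRingHom (ZMod 2)) = phi2 from mp_phiInt,
      show aa.map (Int.castRingHom (ZMod 2)) = phi2 ^ j from hj, sub_self]
  have hdvd : (C (2:ℤ)) ∣ (aa - phiInt ^ j) := by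
    rw [Polynomial.C_dvd_iff_dvd_coeff]
    intro n
    have : ((aa - phiInt ^ j).coeff n : ZMod 2) = 0 := by
      have := congrArg (fun p => Polynomial.coeff p n) hmap0
      simp only [Polynomial.coeff_map, Polynomial.coeff_zero] at this
      exact_mod_cast this
    exact_mod_cast (ZMod.intCast_zmod_eq_zero_iff_dvd _ 2).mp this
  obtain ⟨u, hu⟩ := hdvd
  refine ⟨phiInt ^ (j-1), u, ?_⟩
  have hC2 : (C (2:ℤ)) = (2 : Polynomial ℤ) := by norm_num
  have hpow : phiInt * phiInt ^ (j-1) = phiInt ^ j := by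
    rw [← pow_succ']
    congr 1
    omega
  rw [hpow, ← hC2]
  linear_combination hu

lemma key_monic (G : Polynomial ℤ) (e : ℕ) (hmod2 : mp G = phi2 ^ e)
    (hmat : ∀ p q u v : Polynomial ℤ, G ≠ (phiInt * p + 2 * u) * (phiInt * q + 2 * v))
    (aa bb : Polynomial ℤ) (haa : aa.Monic) (hbb : bb.Monic)
    (hab : G = aa * bb) (hua : ¬ IsUnit aa) (hub : ¬ IsUnit bb) : False := by
  have hdega : 1 ≤ aa.natDegree := by
    rcases Nat.eq_zero_or_pos aa.natDegree with h | h
    · exact absurd (haa.natDegree_eq_zero.mp h ▸ isUnit_one) hua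
    · exact h
  have hdegb : 1 ≤ bb.natDegree := by
    rcases Nat.eq_zero_or_pos bb.natDegree with h | h
    · exact absurd (hbb.natDegree_eq_zero.mp h ▸ isUnit_one) hub
    · exact h
  have hprime : Prime phi2 := UniqueFactorizationMonoid.irreducible_iff_prime.mp phi2_irreducible
  have hmul : mp aa * mp bb = phi2 ^ e := by
    rw [← hmod2, hab]; exact (Polynomial.map_mul _).symm
  have hdvda : mp aa ∣ phi2 ^ e := ⟨mp bb, hmul.symm⟩
  have hdvdb : mp bb ∣ phi2 ^ e := ⟨mp aa, by rw [← hmul]; ring⟩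
  obtain ⟨j, hje, hassocj⟩ := (dvd_prime_pow hprime e).mp hdvda
  obtain ⟨k, hke, hassock⟩ := (dvd_prime_pow hprime e).mp hdvdb
  have hja : mp aa = phi2 ^ j :=
    Polynomial.eq_of_monic_of_associated (haa.map _) (phi2_monic.pow j) hassocj
  have hkb : mp bb = phi2 ^ k :=
    Polynomial.eq_of_monic_of_associated (hbb.map _) (phi2_monic.pow k) hassock
  obtain ⟨p, u, hpu⟩ := lift_factor aa haa hdega hja
  obtain ⟨q, v, hqv⟩ := lift_factor bb hbb hdegb hkb
  exact hmat p q u v (by rw [hab, hpu, hqv])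

lemma key (G : Polynomial ℤ) (hG : G.Monic) (e : ℕ) (he : 1 ≤ e)
    (hmod2 : mp G = phi2 ^ e)
    (hmat : ∀ p q u v : Polynomial ℤ, G ≠ (phiInt * p + 2 * u) * (phiInt * q + 2 * v)) :
    Irreducible (G.map (Int.castRingHom ℚ)) := by
  rw [← algebraMap_int_eq, ← hG.irreducible_iff_irreducible_map_fraction_map]
  have hdeg : 1 ≤ G.natDegree := by
    have h1 : G.natDegree = (mp G).natDegree := (hG.natDegree_map _).symm
    rw [hmod2, natDegree_pow, phi2_natDegree] at h1
    omega
  constructor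
  · intro hu
    have h0 : G.natDegree = 0 := natDegree_eq_of_degree_eq_some (degree_eq_zero_of_isUnit hu)
    omega
  · intro aa bb hab
    by_contra hcon
    push_neg at hcon
    obtain ⟨hua, hub⟩ := hcon
    have hlc : aa.leadingCoeff * bb.leadingCoeff = 1 := by
      rw [← leadingCoeff_mul, ← hab, hG]
    rcases Int.eq_one_or_neg_one_of_mul_eq_one' hlc with ⟨h1, h2⟩ | ⟨h1, h2⟩
    · exact key_monic G e hmod2 hmat aa bb h1 h2 hab hua hub
    · have haa : (-aa).Monic := by
        show (-aa).leadingCoeff = 1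
        rw [leadingCoeff_neg, h1, neg_neg]
      have hbb : (-bb).Monic := by
        show (-bb).leadingCoeff = 1
        rw [leadingCoeff_neg, h2, neg_neg]
      exact key_monic G e hmod2 hmat (-aa) (-bb) haa hbb (by rw [hab]; ring)
        (by simpa using hua) (by simpa using hub)

-- ## Assembly

lemma K_eq : K = phiInt + 2 * X^2 := by unfold K phiInt; ring

lemma final_case1 (t : ℕ) (G : Polynomial ℤ)
    (hid : G * (a (t+2) + a (t+1)) = a (t+4) + a (t+1)) (hdvd : ¬ (3 ∣ t + 1)) :
    Irreducible (G.map (Int.castRingHom ℚ)) := by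
  have hsmonic : (a (t+2) + a (t+1)).Monic := @add_monic (t+1) (t+1) le_rfl
  have hTmonic : (a (t+4) + a (t+1)).Monic := @add_monic (t+3) (t+1) (by omega)
  have hGmonic : G.Monic := hsmonic.of_mul_monic_left
    (show ((a (t+2) + a (t+1)) * G).Monic by rw [mul_comm, hid]; exact hTmonic)
  apply key G hGmonic (2^(t+1)) Nat.one_le_two_pow (mpG_case1 t G hid)
  intro p q u v heq
  set s := a (t+2) + a (t+1) with hs
  have hpoly : 2 * (a (t+4) + a (t+1)) =
      phiInt * (2*phiInt*p*q*s + 4*(p*v*s) + 4*(u*q*s)) + 8 * (u*v*s) := by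
    rw [← hid, heq]; ring
  have := congrArg ψ hpoly
  simp only [map_mul, map_add, ψ_phiInt, ψ_two, ψ_eight, ψ_a, zero_mul, mul_zero,
    zero_add, add_zero] at this
  exact case1_ne (t+1) (by omega) hdvd this

lemma final_case2 (t : ℕ) (G : Polynomial ℤ)
    (hid : G * (a (t+2) + a (t+1)) * K = a (t+4) + a (t+1)) (hdvd : 3 ∣ t + 1) :
    Irreducible (G.map (Int.castRingHom ℚ)) := by
  have hsmonic : (a (t+2) + a (t+1)).Monic := @add_monic (t+1) (t+1) le_rfl
  have hTmonic : (a (t+4) + a (t+1)).Monic := @add_monic (t+3) (t+1) (by omega)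
  have hGsmonic : (G * (a (t+2) + a (t+1))).Monic := K_monic.of_mul_monic_left
    (show (K * (G * (a (t+2) + a (t+1)))).Monic by rw [mul_comm, hid]; exact hTmonic)
  have hGmonic : G.Monic := hsmonic.of_mul_monic_left
    (show ((a (t+2) + a (t+1)) * G).Monic by rw [mul_comm]; exact hGsmonic)
  have he1 : 1 ≤ 2^(t+1) - 1 := by
    have : 2 ≤ 2^(t+1) := by
      calc 2 = 2^1 := by norm_num
        _ ≤ 2^(t+1) := Nat.pow_le_pow_right (by norm_num) (by omega)
    omega
  apply key G hGmonic (2^(t+1) - 1) he1 (mpG_case2 t G hid)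
  intro p q u v heq
  set s := a (t+2) + a (t+1) with hs
  have hpoly : a (t+4) + a (t+1) =
      phiInt * ((phiInt^2*p*q + 2*phiInt*p*q*X^2 + 2*phiInt*p*v + 4*(p*v*X^2)
        + 2*phiInt*u*q + 4*(u*q*X^2) + 4*(u*v))*s) + 8 * (u*v*X^2*s) := by
    rw [← hid, heq, K_eq]; ring
  have := congrArg ψ hpoly
  simp only [map_mul, map_add, ψ_phiInt, ψ_two, ψ_eight, ψ_a, zero_mul, mul_zero,
    zero_add, add_zero] at this
  exact case2_ne (t+1) hdvd (by omega) this

end MisAux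

/-- For every `m ≥ 2`, `G_{2,m,3}` is irreducible over `ℚ`. -/
theorem misiurewicz_irreducible_two_three (m : ℕ) (hm : 2 ≤ m)
    (G : Polynomial ℤ) (hG : IsMisiurewicz 2 m 3 G) :
    Irreducible (G.map (Int.castRingHom ℚ)) := by
  obtain ⟨t, rfl⟩ : ∃ t, m = t + 2 := ⟨m - 2, by omega⟩
  by_cases hdvd : 3 ∣ t + 1
  · exact MisAux.final_case2 t G (MisAux.identity2 t G hG hdvd) hdvd
  · exact MisAux.final_case1 t G (MisAux.identity1 t G hG hdvd) hdvd
end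
end

section
/- Let d > 3 be an integer. Then the polynomial c^{d−1} + 1 is reducible in 𝔽_p[c] for every rational prime p. -/
open Polynomial

lemma aux {F : Type*} [Field F] (n : ℕ) (g : F[X]) (hg : g ∣ (X ^ n + 1 : F[X]))
    (h1 : 0 < g.natDegree) (h2 : g.natDegree < n) :
    ∃ g' h' : F[X], (X ^ n + 1 : F[X]) = g' * h' ∧
      g'.degree < (X ^ n + 1 : F[X]).degree ∧ h'.degree < (X ^ n + 1 : F[X]).degree := by
  obtain ⟨h, hf⟩ := hg
  have hn : 0 < n := lt_trans h1 h2
  have hfdeg : (X ^ n + 1 : F[X]).natDegree = n := by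
    compute_degree <;> simp [hn.ne']
  have hf0 : (X ^ n + 1 : F[X]) ≠ 0 := by
    intro h0
    rw [h0, natDegree_zero] at hfdeg; omega
  have hg0 : g ≠ 0 := by rintro rfl; simp at hf; exact hf0 hf
  have hh0 : h ≠ 0 := by rintro rfl; simp at hf; exact hf0 hf
  have hsum : g.natDegree + h.natDegree = n := by
    rw [← hfdeg, hf, natDegree_mul hg0 hh0]
  refine ⟨g, h, hf, ?_, ?_⟩
  · rw [degree_eq_natDegree hg0, degree_eq_natDegree hf0, hfdeg]
    exact_mod_cast (by omega : g.natDegree < n)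
  · rw [degree_eq_natDegree hh0, degree_eq_natDegree hf0, hfdeg]
    exact_mod_cast (by omega : h.natDegree < n)

lemma sq_cases (p : ℕ) (hp : p.Prime) (hp2 : p ≠ 2) :
    ∃ a : ZMod p, a ^ 2 = -1 ∨ a ^ 2 = 2 ∨ a ^ 2 = -2 := by
  haveI : Fact p.Prime := ⟨hp⟩
  have hodd : p % 2 = 1 := Nat.odd_iff.mp (hp.odd_of_ne_two hp2)
  have h2 : p % 8 % 2 = p % 2 := Nat.mod_mod_of_dvd p (by norm_num)
  have h4 : p % 8 % 4 = p % 4 := Nat.mod_mod_of_dvd p (by norm_num)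
  have h8 : p % 8 = 1 ∨ p % 8 = 3 ∨ p % 8 = 5 ∨ p % 8 = 7 := by omega
  rcases h8 with h | h | h | h
  · obtain ⟨r, hr⟩ := (ZMod.exists_sq_eq_two_iff hp2).mpr (Or.inl h)
    exact ⟨r, Or.inr (Or.inl (by rw [sq, ← hr]))⟩
  · obtain ⟨r, hr⟩ := (ZMod.exists_sq_eq_neg_two_iff hp2).mpr (Or.inr h)
    exact ⟨r, Or.inr (Or.inr (by rw [sq, ← hr]))⟩
  · obtain ⟨r, hr⟩ := (ZMod.exists_sq_eq_neg_one_iff (p := p)).mpr (by omega)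
    exact ⟨r, Or.inl (by rw [sq, ← hr])⟩
  · obtain ⟨r, hr⟩ := (ZMod.exists_sq_eq_two_iff hp2).mpr (Or.inr h)
    exact ⟨r, Or.inr (Or.inl (by rw [sq, ← hr]))⟩

/-- For every integer `d > 3`, the polynomial `c^{d-1} + 1` is reducible
in `𝔽_p[c]` for every rational prime `p`, i.e. it factors as a product of two polynomials
of strictly smaller degree. -/
theorem pow_sub_one_add_one_reducible_mod_every_prime (d : ℕ) (hd : 3 < d)
    (p : ℕ) (hp : p.Prime) :
    ∃ g h : Polynomial (ZMod p),
      (X ^ (d - 1) + 1 : Polynomial (ZMod p)) = g * h ∧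
      g.degree < (X ^ (d - 1) + 1 : Polynomial (ZMod p)).degree ∧
      h.degree < (X ^ (d - 1) + 1 : Polynomial (ZMod p)).degree := by
  haveI : Fact p.Prime := ⟨hp⟩
  set n := d - 1 with hn
  have hn3 : 3 ≤ n := by omega
  have hn0 : n ≠ 0 := by omega
  by_cases hp2 : p = 2
  · subst hp2
    apply aux n (X - C 1)
    · rw [dvd_iff_isRoot, IsRoot.def, eval_add, eval_pow, eval_X, eval_one, one_pow]
      rw [one_add_one_eq_two]
      exact_mod_cast ZMod.natCast_self 2
    · rw [natDegree_X_sub_C]; omega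
    · rw [natDegree_X_sub_C]; omega
  · -- p odd
    obtain ⟨s, m, hmodd, hnm⟩ : ∃ s m, Odd m ∧ 2 ^ s * m = n := by
      refine ⟨n.factorization 2, n / 2 ^ n.factorization 2, ?_,
        Nat.ordProj_mul_ordCompl_eq_self n 2⟩
      have h2 : ¬ 2 ∣ n / 2 ^ n.factorization 2 := Nat.not_dvd_ordCompl Nat.prime_two hn0
      rw [Nat.odd_iff]; omega
    by_cases hm1 : m = 1
    · -- n = 2 ^ s, s ≥ 2
      subst hm1
      have hns : n = 2 ^ s := by omega
      have hs2 : 2 ≤ s := by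
        by_contra hcon
        push_neg at hcon
        interval_cases s <;> omega
      obtain ⟨t, ht1, hnt⟩ : ∃ t, 1 ≤ t ∧ n = 4 * t := by
        refine ⟨2 ^ (s - 2), Nat.one_le_two_pow, ?_⟩
        rw [hns]
        calc 2 ^ s = 2 ^ (s - 2 + 2) := by rw [Nat.sub_add_cancel hs2]
          _ = 4 * 2 ^ (s - 2) := by rw [pow_add]; ring
      obtain ⟨a, ha | ha | ha⟩ := sq_cases p hp hp2
      · apply aux n (X ^ (2 * t) - C a)
        · refine ⟨X ^ (2 * t) + C a, ?_⟩
          have hCa : (C a : (ZMod p)[X]) * C a = -1 := by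
            rw [← C_mul, ← sq, ha]; simp [map_ofNat]
          have hr : (X ^ (2*t) - C a) * (X ^ (2*t) + C a)
              = X ^ (2*t) * X ^ (2*t) - C a * C a := by ring
          rw [hr, hCa, ← pow_add, show 2*t+2*t = n by omega]; ring
        · have : (X ^ (2*t) - C a : (ZMod p)[X]).natDegree = 2*t := by
            compute_degree <;> first | omega | simp [show t ≠ 0 by omega]
          omega
        · have : (X ^ (2*t) - C a : (ZMod p)[X]).natDegree = 2*t := by
            compute_degree <;> first | omega | simp [show t ≠ 0 by omega]
          omega
      · apply aux n (X ^ (2 * t) + C a * X ^ t + 1)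
        · refine ⟨X ^ (2 * t) - C a * X ^ t + 1, ?_⟩
          have hCa : (C a : (ZMod p)[X]) * C a = 2 := by
            rw [← C_mul, ← sq, ha]; simp [map_ofNat]
          have hr : (X ^ (2*t) + C a * X ^ t + 1) * (X ^ (2*t) - C a * X ^ t + 1)
              = X ^ (2*t) * X ^ (2*t) + (2 - C a * C a) * (X ^ t * X ^ t) + 1 := by ring
          rw [hr, hCa, sub_self, zero_mul, add_zero, ← pow_add,
            show 2*t+2*t = n by omega]
        · have : (X ^ (2*t) + C a * X ^ t + 1 : (ZMod p)[X]).natDegree = 2*t := by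
            compute_degree <;> first | omega | simp [show t ≠ 0 by omega]
          omega
        · have : (X ^ (2*t) + C a * X ^ t + 1 : (ZMod p)[X]).natDegree = 2*t := by
            compute_degree <;> first | omega | simp [show t ≠ 0 by omega]
          omega
      · apply aux n (X ^ (2 * t) + C a * X ^ t - 1)
        · refine ⟨X ^ (2 * t) - C a * X ^ t - 1, ?_⟩
          have hCa : (C a : (ZMod p)[X]) * C a = -2 := by
            rw [← C_mul, ← sq, ha]; simp [map_ofNat]
          have hr : (X ^ (2*t) + C a * X ^ t - 1) * (X ^ (2*t) - C a * X ^ t - 1)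
              = X ^ (2*t) * X ^ (2*t) + (-2 - C a * C a) * (X ^ t * X ^ t) + 1 := by ring
          rw [hr, hCa, sub_neg_eq_add, neg_add_cancel, zero_mul, add_zero, ← pow_add,
            show 2*t+2*t = n by omega]
        · have : (X ^ (2*t) + C a * X ^ t - 1 : (ZMod p)[X]).natDegree = 2*t := by
            compute_degree <;> first | omega | simp [show t ≠ 0 by omega]
          omega
        · have : (X ^ (2*t) + C a * X ^ t - 1 : (ZMod p)[X]).natDegree = 2*t := by
            compute_degree <;> first | omega | simp [show t ≠ 0 by omega]
          omega
    · -- m has odd factor > 1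
      have hm2 : 2 ≤ m := by
        rcases hmodd with ⟨j, hj⟩; omega
      have hk1 : 1 ≤ 2 ^ s := Nat.one_le_two_pow
      have hkn : 2 ^ s < n := by nlinarith
      apply aux n (X ^ (2 ^ s) + 1)
      · have := Odd.add_dvd_pow_add_pow (X ^ (2 ^ s) : (ZMod p)[X]) 1 hmodd
        simpa [← pow_mul, hnm] using this
      · have : (X ^ (2 ^ s) + 1 : (ZMod p)[X]).natDegree = 2 ^ s := by
          compute_degree! <;> omega
        omega
      · have : (X ^ (2 ^ s) + 1 : (ZMod p)[X]).natDegree = 2 ^ s := by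
          compute_degree! <;> omega
        omega
end

section
/- Let d ≥ 2 and let c ∈ ℚ̄ be such that f_{c,d}(x) = x^d + c has exact type (m, n) with m ≠ 0. Set K = ℚ(c) and a_i = f_{c,d}^i(0) ∈ O_K for 1 ≤ i ≤ m+n−1. If n does not divide i, then a_i is a unit in O_K. -/
open Polynomial

noncomputable section

/-- `f_{c,d}(x) = x^d + c` has exact type `(m, n)`: `n` is the minimal positive integer with
`f_{c,d}^{m+n}(0) = f_{c,d}^m(0)`, and `f_{c,d}^{k+n}(0) ≠ f_{c,d}^k(0)` for every `k < m`. -/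
def HasExactType {K : Type*} [CommRing K] (d : ℕ) (c : K) (m n : ℕ) : Prop :=
  0 < n ∧
  (fun x => x ^ d + c)^[m + n] 0 = (fun x => x ^ d + c)^[m] 0 ∧
  (∀ j, 0 < j → j < n → (fun x => x ^ d + c)^[m + j] 0 ≠ (fun x => x ^ d + c)^[m] 0) ∧
  (∀ k, k < m → (fun x => x ^ d + c)^[k + n] 0 ≠ (fun x => x ^ d + c)^[k] 0)

namespace OrbitUnitAux

lemma iter_succ {R : Type*} [CommRing R] (d : ℕ) (c : R) (j : ℕ) :
    (fun x => x ^ d + c)^[j + 1] 0 = ((fun x => x ^ d + c)^[j] 0) ^ d + c := by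
  rw [Function.iterate_succ_apply']

/-- The polynomial in `c` giving `f_{c,d}^k(0)`. -/
def itP (d : ℕ) : ℕ → ℤ[X]
  | 0 => 0
  | k + 1 => itP d k ^ d + X

lemma aeval_itP {R : Type*} [CommRing R] (d : ℕ) (c : R) :
    ∀ k, aeval c (itP d k) = (fun x => x ^ d + c)^[k] 0
  | 0 => by simp [itP]
  | k + 1 => by
    rw [itP, map_add, map_pow, aeval_X, aeval_itP d c k, iter_succ]

lemma itP_monic (d : ℕ) (hd : 2 ≤ d) :
    ∀ k, (itP d (k + 1)).Monic ∧ (itP d (k + 1)).natDegree = d ^ k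
  | 0 => by
    have : itP d 1 = X := by
      simp [itP, zero_pow (by omega : d ≠ 0)]
    rw [this]
    exact ⟨monic_X, natDegree_X⟩
  | k + 1 => by
    obtain ⟨hM, hD⟩ := itP_monic d hd k
    have hpowD : ((itP d (k + 1)) ^ d).natDegree = d ^ (k + 1) := by
      rw [hM.natDegree_pow, hD, pow_succ]; ring
    have hdeg : degree (X : ℤ[X]) < degree (itP d (k + 1) ^ d) := by
      apply degree_lt_degree
      rw [natDegree_X, hpowD]
      calc 1 < 2 := one_lt_two
        _ ≤ d ^ (k + 1) := by
          calc 2 ≤ d := hd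
            _ = d ^ 1 := (pow_one d).symm
            _ ≤ d ^ (k + 1) := Nat.pow_le_pow_right (by omega) (by omega)
    refine ⟨(hM.pow d).add_of_left hdeg, ?_⟩
    show (itP d (k+1) ^ d + X).natDegree = d ^ (k + 1)
    rw [natDegree_add_eq_left_of_degree_lt hdeg]
    exact hpowD

/-- `c` is integral over `ℤ` when its orbit is eventually periodic. -/
lemma c_integral {K : Type*} [Field K] (d m n : ℕ) (hd : 2 ≤ d) (hm : m ≠ 0) (hn : 0 < n)
    (c : K)
    (heq : (fun x => x ^ d + c)^[m + n] 0 = (fun x => x ^ d + c)^[m] 0) :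
    IsIntegral ℤ c := by
  obtain ⟨m', rfl⟩ : ∃ m', m = m' + 1 := ⟨m - 1, by omega⟩
  obtain ⟨t, ht⟩ : ∃ t, m' + 1 + n = t + 1 := ⟨m' + n, by omega⟩
  refine ⟨itP d (m' + 1 + n) - itP d (m' + 1), ?_, ?_⟩
  · rw [ht]
    obtain ⟨hM1, hD1⟩ := itP_monic d hd t
    obtain ⟨hM2, hD2⟩ := itP_monic d hd m'
    refine hM1.sub_of_left (degree_lt_degree ?_)
    rw [hD1, hD2]
    exact Nat.pow_lt_pow_right (by omega) (by omega)
  · rw [← aeval_def, map_sub, aeval_itP, aeval_itP, heq, sub_self]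

end OrbitUnitAux

open OrbitUnitAux in
/-- Let `d ≥ 2` and `c ∈ ℚ̄` be such that `f_{c,d}` has exact type `(m,n)`
with `m ≠ 0`, and set `K = ℚ(c)`, `a_i = f_{c,d}^i(0)`. If `n ∤ i` (for `1 ≤ i ≤ m+n-1`),
then `a_i` is a unit in `O_K`. -/
theorem orbit_unit_of_not_dvd (d m n : ℕ) (hd : 2 ≤ d)
    (K : Type*) [Field K] [NumberField K] (c : K)
    (hgen : Algebra.adjoin ℚ {c} = ⊤)
    (htype : HasExactType d c m n) (hm : m ≠ 0)
    (i : ℕ) (hi1 : 1 ≤ i) (hi2 : i ≤ m + n - 1) (hni : ¬ n ∣ i) :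
    ∃ u : (NumberField.RingOfIntegers K)ˣ,
      ((u : NumberField.RingOfIntegers K) : K) = (fun x => x ^ d + c)^[i] 0 := by
  classical
  obtain ⟨hn, heq, hmin, hstrict⟩ := htype
  set R := NumberField.RingOfIntegers K
  have hcint : IsIntegral ℤ c := c_integral d m n hd hm hn c heq
  set c' : R := ⟨c, hcint⟩ with hc'
  -- the orbit inside the ring of integers
  set a : ℕ → R := fun j => (fun x => x ^ d + c')^[j] 0 with ha
  have hmap : ∀ j, algebraMap R K (a j) = (fun x => x ^ d + c)^[j] 0 := by
    intro j
    induction j with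
    | zero => simp [ha]
    | succ j ih =>
      have h1 : a (j + 1) = a j ^ d + c' := iter_succ d c' j
      rw [h1, iter_succ, map_add, map_pow, ih]
      rfl
  have hinj : Function.Injective (algebraMap R K) :=
    NumberField.RingOfIntegers.coe_injective
  -- transfer hypotheses to R
  have haeq : a (m + n) = a m := by
    apply hinj; rw [hmap, hmap]; exact heq
  have hamin : ∀ j, 0 < j → j < n → a (m + j) ≠ a m := by
    intro j h1 h2 h
    exact hmin j h1 h2 (by rw [← hmap, ← hmap, h])
  -- basic recurrences
  have hstep : ∀ j, a (j + 1) = a j ^ d + c' := fun j => iter_succ d c' j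
  have ha0 : a 0 = 0 := rfl
  -- eventual periodicity in R
  have hper : ∀ k, a (m + k + n) = a (m + k) := by
    intro k
    induction k with
    | zero => simpa using haeq
    | succ k ih =>
      have h1 : m + (k + 1) + n = (m + k + n) + 1 := by ring
      have h2 : m + (k + 1) = (m + k) + 1 := by ring
      rw [h1, h2, hstep, hstep, ih]
  -- suppose a i is not a unit
  suffices hu : IsUnit (a i) by
    obtain ⟨u, hu'⟩ := hu
    exact ⟨u, by rw [NumberField.RingOfIntegers.coe_eq_algebraMap, hu', hmap]⟩
  by_contra hnu
  obtain ⟨p, hpmax, hple⟩ := Ideal.exists_le_maximal (Ideal.span {a i})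
    (by rwa [Ne, Ideal.span_singleton_eq_top])
  have hai : a i ∈ p := hple (Ideal.subset_span rfl)
  -- congruences mod an ideal propagate through f
  have hcong : ∀ (J : Ideal R) (x y : R), x - y ∈ J → (x ^ d + c') - (y ^ d + c') ∈ J := by
    intro J x y hxy
    have hgeom := geom_sum₂_mul x y d
    have : (x ^ d + c') - (y ^ d + c') = (∑ t ∈ Finset.range d, x ^ t * y ^ (d - 1 - t)) * (x - y) := by
      rw [hgeom]; ring
    rw [this]
    exact Ideal.mul_mem_left J _ hxy
  -- r : the exact period of 0 mod p
  have hex : ∃ j, 0 < j ∧ a j ∈ p := ⟨i, hi1, hai⟩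
  set r := Nat.find hex with hr
  obtain ⟨hrpos, har⟩ : 0 < r ∧ a r ∈ p := Nat.find_spec hex
  -- pure periodicity mod p with period r
  have hppp : ∀ t, a (t + r) - a t ∈ p := by
    intro t
    induction t with
    | zero => simpa [ha0] using har
    | succ t ih =>
      have h1 : t + 1 + r = (t + r) + 1 := by ring
      rw [h1, hstep, hstep]
      exact hcong p _ _ ih
  have hmult : ∀ k, a (k * r) ∈ p := by
    intro k
    induction k with
    | zero => simp [ha0]
    | succ k ih =>
      have h1 : (k + 1) * r = k * r + r := by ring
      have := hppp (k * r)
      rw [h1]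
      have := Ideal.add_mem p this ih
      simpa using this
  have hdvd : ∀ t, a t ∈ p → r ∣ t := by
    intro t ht
    rcases Nat.lt_or_ge t r with h | h
    · -- t < r : then t = 0 by minimality
      rcases Nat.eq_zero_or_pos t with rfl | htpos
      · exact Dvd.intro 0 rfl
      · exact absurd ⟨htpos, ht⟩ (Nat.find_min hex h)
    · -- induction on t
      have key : ∀ t, a t ∈ p → r ∣ t := by
        intro t
        induction t using Nat.strong_induction_on with
        | _ t IH =>
          intro ht
          rcases Nat.lt_or_ge t r with h' | h'
          · rcases Nat.eq_zero_or_pos t with rfl | htpos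
            · exact Dvd.intro 0 rfl
            · exact absurd ⟨htpos, ht⟩ (Nat.find_min hex h')
          · have h2 : a (t - r + r) - a (t - r) ∈ p := hppp (t - r)
            have h3 : t - r + r = t := by omega
            rw [h3] at h2
            have h4 : a (t - r) ∈ p := by
              have := Ideal.sub_mem p ht h2
              simpa using this
            obtain ⟨q, hq⟩ := IH (t - r) (by omega) h4
            exact ⟨q + 1, by rw [Nat.mul_succ]; omega⟩
      exact key t ht
  -- r divides n
  have hrn : r ∣ n := by
    have h1 : a (m * r + n) = a (m * r) := by
      have : m * r = m + (m * r - m) := by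
        have : m ≤ m * r := Nat.le_mul_of_pos_right m hrpos
        omega
      rw [this]; exact hper _
    have h2 : a (m * r + n) ∈ p := by rw [h1]; exact hmult m
    have h3 : r ∣ m * r + n := hdvd _ h2
    have h4 : r ∣ m * r := dvd_mul_left r m
    exact (Nat.dvd_add_right h4).mp h3
  have hri : r ∣ i := hdvd i hai
  have hrltn : r < n := by
    rcases lt_or_eq_of_le (Nat.le_of_dvd hn hrn) with h | h
    · exact h
    · exact absurd (h ▸ hri) hni
  -- two distinct fixed points of f^[n] inside p
  set t0 := m * r with ht0
  have htm : m ≤ t0 := Nat.le_mul_of_pos_right m hrpos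
  have hz : a t0 ∈ p := hmult m
  have hw : a (t0 + r) ∈ p := by
    have : t0 + r = (m + 1) * r := by rw [ht0]; ring
    rw [this]; exact hmult (m + 1)
  have hfixz : a (t0 + n) = a t0 := by
    have : t0 = m + (t0 - m) := by omega
    rw [this]; exact hper _
  have hfixw : a (t0 + r + n) = a (t0 + r) := by
    have : t0 + r = m + (t0 + r - m) := by omega
    rw [this]; exact hper _
  have hzw : a t0 ≠ a (t0 + r) := by
    intro h
    -- propagate: a (t0 + k) period r for all k, contradict minimality at m + r
    have hpr : ∀ k, a (t0 + k + r) = a (t0 + k) := by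
      intro k
      induction k with
      | zero => simpa using h.symm
      | succ k ih =>
        have e1 : t0 + (k + 1) + r = (t0 + k + r) + 1 := by ring
        have e2 : t0 + (k + 1) = (t0 + k) + 1 := by ring
        rw [e1, e2, hstep, hstep, ih]
    -- choose N with m + N * n ≥ t0 ; note a (m + N*n) = a m
    have hNper : ∀ N, a (m + N * n) = a m := by
      intro N
      induction N with
      | zero => simp
      | succ N ih =>
        have e1 : m + (N + 1) * n = m + N * n + n := by ring
        rw [e1]
        have e2 : m + N * n = m + (N * n) := rfl
        rw [hper (N * n), ih]
    have hN : m + t0 * n ≥ t0 := by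
      have : t0 * n ≥ t0 := Nat.le_mul_of_pos_right t0 hn
      omega
    have h1 : a (m + t0 * n + r) = a (m + t0 * n) := by
      have e : m + t0 * n = t0 + (m + t0 * n - t0) := by omega
      rw [e]; exact hpr _
    have h2 : a (m + r + t0 * n) = a (m + r) := by
      have e : m + r + t0 * n = m + (r + t0 * n) := by ring
      rw [e]
      have : ∀ N, a (m + (r + N * n)) = a (m + r) := by
        intro N
        induction N with
        | zero => simp
        | succ N ih =>
          have e1 : m + (r + (N + 1) * n) = m + (r + N * n) + n := by ring
          rw [e1]
          have e2 : m + (r + N * n) = m + (r + N * n) := rfl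
          rw [hper (r + N * n), ih]
      exact this t0
    have h3 : a (m + r) = a m := by
      rw [← h2]
      have e : m + r + t0 * n = m + t0 * n + r := by ring
      rw [e, h1, hNper]
    exact hamin r hrpos hrltn h3
  -- contraction: the difference lies in every power of p
  have hboost : ∀ (k : ℕ) (x y : R), x ∈ p → y ∈ p → x - y ∈ p ^ k →
      (x ^ d + c') - (y ^ d + c') ∈ p ^ (k + 1) := by
    intro k x y hx hy hxy
    have hgeom := geom_sum₂_mul x y d
    have heq2 : (x ^ d + c') - (y ^ d + c') =
        (∑ t ∈ Finset.range d, x ^ t * y ^ (d - 1 - t)) * (x - y) := by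
      rw [hgeom]; ring
    rw [heq2, pow_succ']
    apply Ideal.mul_mem_mul _ hxy
    apply Ideal.sum_mem
    intro t htt
    rcases Nat.eq_zero_or_pos t with rfl | htpos
    · have : d - 1 - 0 ≥ 1 := by omega
      have : y ^ (d - 1 - 0) ∈ p := by
        have e : d - 1 - 0 = (d - 1 - 0 - 1) + 1 := by omega
        rw [e, pow_succ]
        exact Ideal.mul_mem_left p _ hy
      exact Ideal.mul_mem_left p (x ^ 0) this
    · have : x ^ t ∈ p := by
        have e : t = (t - 1) + 1 := by omega
        rw [e, pow_succ]
        exact Ideal.mul_mem_left p _ hx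
      exact Ideal.mul_mem_right _ p this
  -- iterate the map n times keeps difference in p^(k+1) once boosted
  have hkeep : ∀ (J : Ideal R) (j : ℕ) (x y : R), x - y ∈ J →
      (fun x => x ^ d + c')^[j] x - (fun x => x ^ d + c')^[j] y ∈ J := by
    intro J j
    induction j with
    | zero => intro x y h; simpa using h
    | succ j ih =>
      intro x y h
      rw [Function.iterate_succ_apply, Function.iterate_succ_apply]
      exact ih _ _ (hcong J x y h)
  have hiter : ∀ k, a t0 - a (t0 + r) ∈ p ^ k := by
    intro k
    induction k with
    | zero => simp
    | succ k ih =>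
      have h1 : (fun x => x ^ d + c')^[n] (a t0) = a t0 := by
        conv_rhs => rw [← hfixz]
        show (fun x => x ^ d + c')^[n] ((fun x => x ^ d + c')^[t0] 0) =
          (fun x => x ^ d + c')^[t0 + n] 0
        rw [← Function.iterate_add_apply, Nat.add_comm]
      have h2 : (fun x => x ^ d + c')^[n] (a (t0 + r)) = a (t0 + r) := by
        conv_rhs => rw [← hfixw]
        show (fun x => x ^ d + c')^[n] ((fun x => x ^ d + c')^[t0 + r] 0) =
          (fun x => x ^ d + c')^[t0 + r + n] 0
        rw [← Function.iterate_add_apply, Nat.add_comm]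
      obtain ⟨n', hn'⟩ : ∃ n', n = n' + 1 := ⟨n - 1, by omega⟩
      have h3 : a t0 - a (t0 + r) =
          (fun x => x ^ d + c')^[n] (a t0) - (fun x => x ^ d + c')^[n] (a (t0 + r)) := by
        rw [h1, h2]
      rw [h3, hn', Function.iterate_succ_apply, Function.iterate_succ_apply]
      exact hkeep _ n' _ _ (hboost k _ _ hz hw ih)
  have hbot : a t0 - a (t0 + r) ∈ (⊥ : Ideal R) := by
    rw [← Ideal.iInf_pow_eq_bot_of_isDomain p hpmax.ne_top]
    exact Submodule.mem_iInf _ |>.mpr hiter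
  exact hzw (sub_eq_zero.mp (Ideal.mem_bot.mp hbot))
end
end

section
/- Let d be a rational prime, m ≥ 2, n ≥ 1, and let c_0 be a root of the Misiurewicz polynomial G_{d,m,n}(c). Set K = ℚ(c_0) and a_n = f_{c_0,d}^n(0) ∈ O_K. Then a_n = G_{d,0,n}(c_0)·u for some unit u of O_K. -/
open Polynomial

noncomputable section

/-!
If some `a_k = f^k(0)`, `k` a proper divisor of `n`, were not a unit, reduce modulo `P = (a_k)`:
there `0` is periodic, of exact period `e ∣ k`. Every collision `a_{s+j} = a_s` then has `e ∣ j`,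
and for `e ∣ j` the difference `a_{s+j} - a_s` is `a_{s+e} - a_s` times a cofactor `≡ 1 mod P`
(the cycle of `0` is superattracting mod `P`). So in `∏_{j ∣ n} (f^{s+j}(0) - f^s(0))^{μ(n/j)}`
the factors vanishing at `c₀` combine into `(f^{s+e}(0) - f^s(0))^{∑_{e ∣ j ∣ n} μ(n/j)}`,
whose exponent is `0` because `e ≠ n`. Hence `G_{d,m,n}`, a quotient of such products, is a
ratio of polynomials not vanishing at `c₀`, contradicting `G_{d,m,n}(c₀) = 0`. Once all `a_k`
with `k ∣ n`, `k < n` are units, the Möbius product defining `G_{d,0,n}` exhibits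
`a_n / G_{d,0,n}(c₀)` as a unit.
-/

open Function Finset
open scoped ArithmeticFunction.Moebius nonZeroDivisors

lemma Nat.exists_lt_dvd_add {e : ℕ} (he : 0 < e) (s : ℕ) : ∃ i < e, e ∣ i + s := by
  have : NeZero e := ⟨he.ne'⟩
  refine ⟨(-(s : ZMod e)).val, ZMod.val_lt _, ?_⟩
  rw [← ZMod.natCast_eq_zero_iff]
  simp

lemma Finset.prod_zpow_eq_zpow_sum₀ {ι G₀ : Type*} [CommGroupWithZero G₀] {a : G₀}
    (ha : a ≠ 0) (s : Finset ι) (f : ι → ℤ) :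
    ∏ i ∈ s, a ^ f i = a ^ ∑ i ∈ s, f i := by
  induction s using Finset.cons_induction with
  | empty => simp
  | cons i s hi ih => rw [prod_cons, sum_cons, ih, zpow_add₀ ha]

namespace Misiurewicz

section Dynamics

abbrev unicrit {R : Type*} [CommSemiring R] (d : ℕ) (c : R) : R → R := fun x => x ^ d + c

lemma map_iterate_unicrit {R S : Type*} [CommSemiring R] [CommSemiring S] (φ : R →+* S)
    (d : ℕ) (c : R) (i : ℕ) (z : R) :
    φ ((unicrit d c)^[i] z) = (unicrit d (φ c))^[i] (φ z) :=
  Semiconj.iterate_right (f := φ) (fun x => by simp) i z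

lemma critPoly_eq_iterate (d i : ℕ) : critPoly d i = (unicrit d (X : ℤ[X]))^[i] 0 := by
  induction i with
  | zero => rfl
  | succ i ih => rw [iterate_succ_apply', ← ih]; rfl

lemma aeval_critPoly {R : Type*} [CommRing R] (d : ℕ) (c : R) (i : ℕ) :
    aeval c (critPoly d i) = (unicrit d c)^[i] 0 := by
  simpa [critPoly_eq_iterate] using map_iterate_unicrit (aeval c).toRingHom d X i 0

lemma critPoly_add (d s k : ℕ) : critPoly d (s + k) = (unicrit d X)^[k] (critPoly d s) := by
  rw [critPoly_eq_iterate, critPoly_eq_iterate, add_comm, iterate_add_apply]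

lemma critPoly_injective {d : ℕ} (hd : d ≠ 0) : Injective (critPoly d) := by
  have hmono : StrictMono fun i => (unicrit d (1 : ℕ))^[i] 0 :=
    strictMono_nat_of_lt_succ fun i => by
      rw [iterate_succ_apply']
      exact Nat.lt_succ_of_le (Nat.le_self_pow hd _)
  intro i j h
  apply hmono.injective
  have hcast (k : ℕ) : (((unicrit d 1)^[k] 0 : ℕ) : ℤ) = aeval 1 (critPoly d k) := by
    simpa [aeval_critPoly] using map_iterate_unicrit (Nat.castRingHom ℤ) d 1 k 0
  exact Nat.cast_injective (R := ℤ) (by simp only [hcast, h])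

end Dynamics

section Cofactor

variable {R : Type*} [CommRing R] (d : ℕ) (c : R)

def diffQuot (x y : R) : R := ∑ r ∈ range d, x ^ r * y ^ (d - 1 - r)

lemma unicrit_sub_unicrit (x y : R) :
    unicrit d c x - unicrit d c y = (x - y) * diffQuot d x y := by
  rw [diffQuot, mul_comm, geom_sum₂_mul]
  ring

lemma iterate_sub_iterate (x y : R) (t : ℕ) :
    (unicrit d c)^[t] x - (unicrit d c)^[t] y =
      (x - y) * ∏ i ∈ range t, diffQuot d ((unicrit d c)^[i] x) ((unicrit d c)^[i] y) := by
  induction t with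
  | zero => simp
  | succ t ih =>
    rw [iterate_succ_apply', iterate_succ_apply', prod_range_succ, ← mul_assoc, ← ih,
      unicrit_sub_unicrit]

def iterCofactor (e j : ℕ) (z : R) : R :=
  ∑ t ∈ range j, ∏ i ∈ range (e * t),
    diffQuot d ((unicrit d c)^[i] ((unicrit d c)^[e] z)) ((unicrit d c)^[i] z)

lemma iterate_mul_sub (e j : ℕ) (z : R) :
    (unicrit d c)^[e * j] z - z = ((unicrit d c)^[e] z - z) * iterCofactor d c e j z := by
  induction j with
  | zero => simp [iterCofactor]
  | succ j ih =>
    have hsplit : (unicrit d c)^[e * (j + 1)] z - z =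
        ((unicrit d c)^[e * j] ((unicrit d c)^[e] z) - (unicrit d c)^[e * j] z) +
          ((unicrit d c)^[e * j] z - z) := by
      rw [mul_add_one, iterate_add_apply]; ring
    rw [hsplit, ih, iterate_sub_iterate, iterCofactor, iterCofactor, sum_range_succ]
    ring

lemma map_iterCofactor {S : Type*} [CommRing S] (φ : R →+* S) (e j : ℕ) (z : R) :
    φ (iterCofactor d c e j z) = iterCofactor d (φ c) e j (φ z) := by
  simp [iterCofactor, diffQuot, map_iterate_unicrit]

lemma aeval_iterCofactor_critPoly (e j s : ℕ) :
    aeval c (iterCofactor d X e j (critPoly d s)) = iterCofactor d c e j ((unicrit d c)^[s] 0) := by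
  simpa [aeval_critPoly] using map_iterCofactor d X (aeval c).toRingHom e j (critPoly d s)

variable {d c}

lemma iterCofactor_eq_one (hd : 2 ≤ d) {e : ℕ} (he : 0 < e)
    (hper : IsPeriodicPt (unicrit d c) e 0) {j : ℕ} (hj : 0 < j) (s : ℕ) :
    iterCofactor d c e j ((unicrit d c)^[s] 0) = 1 := by
  obtain ⟨j, rfl⟩ := Nat.exists_eq_add_of_lt hj
  rw [iterCofactor, zero_add, sum_range_succ', mul_zero, range_zero, prod_empty, add_eq_right]
  refine sum_eq_zero fun t _ => ?_
  -- a product over a full period of the cycle of `0` contains `diffQuot d 0 0 = d * 0 ^ (d - 1)`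
  obtain ⟨i, hie, hdvd⟩ := Nat.exists_lt_dvd_add he s
  have hzero : (unicrit d c)^[i] ((unicrit d c)^[s] 0) = 0 := by
    obtain ⟨k, hk⟩ := hdvd
    rw [← iterate_add_apply, hk]
    exact (hper.mul_const k).eq
  have hi : i ∈ range (e * (t + 1)) :=
    mem_range.2 (hie.trans_le (Nat.le_mul_of_pos_right e t.succ_pos))
  refine prod_eq_zero hi ?_
  rw [(hper.apply_iterate s).eq, hzero, diffQuot, geom_sum₂_self, zero_pow (by omega), mul_zero]

end Cofactor

section Ratios

lemma toRF_injective : Injective toRF := IsFractionRing.injective ℤ[X] RF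

lemma toRF_ne_zero {p : ℤ[X]} (hp : p ≠ 0) : toRF p ≠ 0 :=
  (map_ne_zero_iff _ toRF_injective).2 hp

lemma toRF_mul (p q : ℤ[X]) : toRF (p * q) = toRF p * toRF q := map_mul _ p q

lemma toRF_sub (p q : ℤ[X]) : toRF (p - q) = toRF p - toRF q := map_sub _ p q

variable {R : Type*} [CommRing R] (c : R) (M : Submonoid R)

/-- For `M = R⁰` over a domain these are the units of the localization of `ℤ[X]` at the kernel of
evaluation at `c`. -/
def ratiosAt : Submonoid RF where
  carrier := {ξ | ∃ p q : ℤ[X], aeval c p ∈ M ∧ aeval c q ∈ M ∧ ξ * toRF q = toRF p}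
  mul_mem' := by
    rintro ξ η ⟨p, q, hp, hq, h⟩ ⟨p', q', hp', hq', h'⟩
    refine ⟨p * p', q * q', ?_, ?_, ?_⟩
    · simpa using M.mul_mem hp hp'
    · simpa using M.mul_mem hq hq'
    · rw [toRF_mul, toRF_mul, ← h, ← h']; ring
  one_mem' := ⟨1, 1, by simp, by simp, one_mul _⟩

variable {c M}

lemma toRF_mem_ratiosAt {p : ℤ[X]} (hp : aeval c p ∈ M) : toRF p ∈ ratiosAt c M :=
  ⟨p, 1, hp, by simp, by simp [toRF]⟩

lemma inv_mem_ratiosAt (hM : (0 : R) ∉ M) {ξ : RF} (hξ : ξ ∈ ratiosAt c M) :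
    ξ⁻¹ ∈ ratiosAt c M := by
  obtain ⟨p, q, hp, hq, h⟩ := hξ
  have hξ0 : ξ ≠ 0 := by
    rintro rfl
    have hp0 : p = 0 := toRF_injective (by simpa [toRF] using h.symm)
    exact hM (by simpa [hp0] using hp)
  exact ⟨q, p, hq, hp, by rw [← h, inv_mul_cancel_left₀ hξ0]⟩

lemma zpow_mem_ratiosAt (hM : (0 : R) ∉ M) {ξ : RF} (hξ : ξ ∈ ratiosAt c M) (z : ℤ) :
    ξ ^ z ∈ ratiosAt c M := by
  cases z with
  | ofNat k => simpa using pow_mem hξ k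
  | negSucc k => simpa using inv_mem_ratiosAt hM (pow_mem hξ (k + 1))

lemma div_mem_ratiosAt (hM : (0 : R) ∉ M) {ξ η : RF} (hξ : ξ ∈ ratiosAt c M)
    (hη : η ∈ ratiosAt c M) : ξ / η ∈ ratiosAt c M :=
  mul_mem hξ (inv_mem_ratiosAt hM hη)

lemma exists_aeval_mul_eq_of_mem_ratiosAt {p p' : ℤ[X]} {ξ : RF} (h : toRF p' = toRF p * ξ)
    (hξ : ξ ∈ ratiosAt c M) : ∃ u ∈ M, ∃ v ∈ M, aeval c p' * v = aeval c p * u := by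
  obtain ⟨r, q, hr, hq, hξ⟩ := hξ
  refine ⟨aeval c r, hr, aeval c q, hq, ?_⟩
  have hpq : p' * q = p * r := toRF_injective (by rw [toRF_mul, toRF_mul, h, mul_assoc, hξ])
  rw [← map_mul, ← map_mul, hpq]

end Ratios

section Moebius

open ArithmeticFunction

lemma sum_moebius_div_filter_dvd {e n : ℕ} (he : e ∣ n) (hen : e ≠ n) :
    ∑ k ∈ n.divisors with e ∣ k, μ (n / k) = 0 := by
  rcases eq_or_ne n 0 with rfl | hn
  · simp
  obtain ⟨r, rfl⟩ := he
  have hr : 0 < r := Nat.pos_of_ne_zero (right_ne_zero_of_mul hn)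
  have hcond : ∀ k ∈ (e * r).divisors, e ∣ k ↔ e * r / k ∣ r := fun k hk => by
    rw [Nat.div_dvd_iff_dvd_mul (Nat.dvd_of_mem_divisors hk) (Nat.pos_of_mem_divisors hk),
      Nat.mul_dvd_mul_iff_right hr]
  have hsum : ∑ k ∈ r.divisors, μ k = 0 := by
    have hr1 : r ≠ 1 := by rintro rfl; exact hen (mul_one e).symm
    have h := congrArg (· r) moebius_mul_coe_zeta
    simpa only [coe_mul_zeta_apply, one_apply_ne hr1] using h
  rw [filter_congr hcond, sum_filter]
  refine (Nat.sum_div_divisors (e * r) fun j => if j ∣ r then μ j else 0).trans ?_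
  rw [← sum_filter, Nat.divisors_filter_dvd_of_dvd hn (dvd_mul_left r e), hsum]

lemma prod_ite_dvd_zpow_moebius {G₀ : Type*} [CommGroupWithZero G₀] {a : G₀} (ha : a ≠ 0)
    {e n : ℕ} (he : e ∣ n) (hen : e ≠ n) :
    ∏ k ∈ n.divisors, (if e ∣ k then a else 1) ^ μ (n / k) = 1 := by
  calc ∏ k ∈ n.divisors, (if e ∣ k then a else 1) ^ μ (n / k)
      = ∏ k ∈ n.divisors with e ∣ k, a ^ μ (n / k) := by
        rw [prod_filter]
        exact prod_congr rfl fun k _ => by split_ifs <;> simp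
    _ = 1 := by rw [prod_zpow_eq_zpow_sum₀ ha, sum_moebius_div_filter_dvd he hen, zpow_zero]

end Moebius

section MoebiusDiff

def moebiusDiff (d n s : ℕ) : RF :=
  ∏ k ∈ n.divisors, (toRF (critPoly d (s + k)) - toRF (critPoly d s)) ^ μ (n / k)

lemma FRat_eq_div (d m n : ℕ) : FRat d m n = moebiusDiff d n m / moebiusDiff d n (m - 1) := by
  simp only [FRat, moebiusDiff, div_zpow, prod_div_distrib]

variable {R : Type*} [CommRing R] {c : R} {M : Submonoid R}

lemma GRat_mem_ratiosAt (hM : (0 : R) ∉ M) {d n : ℕ}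
    (h : ∀ s, moebiusDiff d n s ∈ ratiosAt c M) (m : ℕ) : GRat d m n ∈ ratiosAt c M := by
  have hF (j : ℕ) : FRat d j n ∈ ratiosAt c M := by
    rw [FRat_eq_div]; exact div_mem_ratiosAt hM (h _) (h _)
  unfold GRat
  split_ifs
  exacts [div_mem_ratiosAt hM (hF m) (hF 1), hF m]

lemma moebiusDiff_mem_ratiosAt [IsDomain R] {d n e : ℕ} (hd : d ≠ 0) (he0 : 0 < e)
    (he : e ∣ n) (hen : e ≠ n)
    (hcof : ∀ s j, 0 < j → iterCofactor d c e j ((unicrit d c)^[s] 0) ≠ 0)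
    (hcoll : ∀ s k, (unicrit d c)^[s + k] 0 = (unicrit d c)^[s] 0 → e ∣ k) (s : ℕ) :
    moebiusDiff d n s ∈ ratiosAt c R⁰ := by
  set D : ℕ → RF := fun k => toRF (critPoly d (s + k) - critPoly d s)
  set u : ℕ → RF := fun k =>
    if e ∣ k then toRF (iterCofactor d X e (k / e) (critPoly d s)) else D k
  have hDe : D e ≠ 0 :=
    toRF_ne_zero (sub_ne_zero.2 fun h => by simpa [he0.ne'] using critPoly_injective hd h)
  have hfac (k : ℕ) : D k = (if e ∣ k then D e else 1) * u k := by
    simp only [u]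
    split_ifs with h
    · obtain ⟨j, rfl⟩ := h
      simp only [D]
      rw [Nat.mul_div_cancel_left j he0, ← toRF_mul, critPoly_add, critPoly_add, iterate_mul_sub]
    · rw [one_mul]
  have hu : ∀ k ∈ n.divisors, u k ∈ ratiosAt c R⁰ := by
    intro k hk
    simp only [u]
    split_ifs with h
    · refine toRF_mem_ratiosAt (mem_nonZeroDivisors_of_ne_zero ?_)
      rw [aeval_iterCofactor_critPoly]
      exact hcof s _ (Nat.div_pos (Nat.le_of_dvd (Nat.pos_of_mem_divisors hk) h) he0)
    · refine toRF_mem_ratiosAt (mem_nonZeroDivisors_of_ne_zero ?_)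
      rw [map_sub, aeval_critPoly, aeval_critPoly, sub_ne_zero]
      exact fun hcol => h (hcoll s k hcol)
  have hsplit : moebiusDiff d n s =
      (∏ k ∈ n.divisors, (if e ∣ k then D e else 1) ^ μ (n / k)) *
        ∏ k ∈ n.divisors, u k ^ μ (n / k) := by
    rw [moebiusDiff, ← prod_mul_distrib]
    exact prod_congr rfl fun k _ => by rw [← toRF_sub, ← mul_zpow, ← hfac]
  rw [hsplit, prod_ite_dvd_zpow_moebius hDe he hen, one_mul]
  exact prod_mem fun k hk => zpow_mem_ratiosAt zero_notMem_nonZeroDivisors (hu k hk) _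

end MoebiusDiff

section ModIdeal

variable {R : Type*} [CommRing R] {d : ℕ} {c : R} {P : Ideal R}

lemma mk_iterate_unicrit (i : ℕ) :
    Ideal.Quotient.mk P ((unicrit d c)^[i] 0) = (unicrit d (Ideal.Quotient.mk P c))^[i] 0 := by
  simpa using map_iterate_unicrit (Ideal.Quotient.mk P) d c i 0

lemma iterCofactor_ne_zero (hper : 0 ∈ periodicPts (unicrit d (Ideal.Quotient.mk P c)))
    (hd : 2 ≤ d) (hP : P ≠ ⊤) (s : ℕ) {j : ℕ} (hj : 0 < j) :
    iterCofactor d c (minimalPeriod (unicrit d (Ideal.Quotient.mk P c)) 0) j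
      ((unicrit d c)^[s] 0) ≠ 0 := by
  have : Nontrivial (R ⧸ P) := Ideal.Quotient.nontrivial_iff.2 hP
  intro h
  have h' := congrArg (Ideal.Quotient.mk P) h
  rw [map_iterCofactor, mk_iterate_unicrit, map_zero,
    iterCofactor_eq_one hd (minimalPeriod_pos_of_mem_periodicPts hper)
      (isPeriodicPt_minimalPeriod _ _) hj] at h'
  exact one_ne_zero h'

lemma minimalPeriod_dvd_of_iterate_add_eq
    (hper : 0 ∈ periodicPts (unicrit d (Ideal.Quotient.mk P c))) {s k : ℕ}
    (h : (unicrit d c)^[s + k] 0 = (unicrit d c)^[s] 0) :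
    minimalPeriod (unicrit d (Ideal.Quotient.mk P c)) 0 ∣ k := by
  have h' := congrArg (Ideal.Quotient.mk P) h
  rw [mk_iterate_unicrit, mk_iterate_unicrit, add_comm, iterate_add_apply] at h'
  rw [← minimalPeriod_apply_iterate hper s]
  exact IsPeriodicPt.minimalPeriod_dvd h'

end ModIdeal

section Orbit

variable {R : Type*} [CommRing R]

theorem isUnit_iterate_of_aeval_eq_zero [IsDomain R] {d m n : ℕ} (hd : 2 ≤ d) {G : ℤ[X]}
    (hG : IsMisiurewicz d m n G) {c : R} (hroot : aeval c G = 0) {k : ℕ}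
    (hk : k ∈ n.divisors) (hkn : k ≠ n) : IsUnit ((unicrit d c)^[k] 0) := by
  by_contra hunit
  set P := Ideal.span {(unicrit d c)^[k] 0}
  have hP : P ≠ ⊤ := by rwa [Ne, Ideal.span_singleton_eq_top]
  have hk0 : IsPeriodicPt (unicrit d (Ideal.Quotient.mk P c)) k 0 := by
    rw [IsPeriodicPt, IsFixedPt, ← mk_iterate_unicrit, Ideal.Quotient.eq_zero_iff_mem]
    exact Ideal.mem_span_singleton_self _
  have hper := mk_mem_periodicPts (Nat.pos_of_mem_divisors hk) hk0
  set e := minimalPeriod (unicrit d (Ideal.Quotient.mk P c)) 0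
  have hek : e ∣ k := hk0.minimalPeriod_dvd
  have hen : e ≠ n := ((Nat.le_of_dvd (Nat.pos_of_mem_divisors hk) hek).trans_lt
    ((Nat.divisor_le hk).lt_of_ne hkn)).ne
  have hGmem : toRF G ∈ ratiosAt c R⁰ := hG ▸ GRat_mem_ratiosAt zero_notMem_nonZeroDivisors
    (moebiusDiff_mem_ratiosAt (by omega) (minimalPeriod_pos_of_mem_periodicPts hper)
      (hek.trans (Nat.dvd_of_mem_divisors hk)) hen
      (fun s _ hj => iterCofactor_ne_zero hper hd hP s hj)
      (fun _ _ => minimalPeriod_dvd_of_iterate_add_eq hper)) m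
  obtain ⟨u, hu, v, -, h⟩ := exists_aeval_mul_eq_of_mem_ratiosAt (p' := G) (p := 1)
    (by simp [toRF]) hGmem
  rw [hroot, zero_mul, map_one, one_mul] at h
  exact zero_notMem_nonZeroDivisors (h ▸ hu)

theorem exists_iterate_eq_aeval_mul_unit [Nontrivial R] {d n : ℕ} (hn : n ≠ 0) {G0 : ℤ[X]}
    (hG0 : IsG0 d n G0) (c : R)
    (hunit : ∀ k ∈ n.divisors, k ≠ n → IsUnit ((unicrit d c)^[k] 0)) :
    ∃ u : Rˣ, (unicrit d c)^[n] 0 = aeval c G0 * u := by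
  have hsplit : toRF G0 = toRF (critPoly d n) *
      ∏ k ∈ n.divisors.erase n, toRF (critPoly d k) ^ μ (n / k) := by
    rw [hG0, G0Rat, ← mul_prod_erase _ _ (Nat.mem_divisors_self n hn), Nat.div_self
      (Nat.pos_of_ne_zero hn), ArithmeticFunction.moebius_apply_one, zpow_one]
  have hmem : ∏ k ∈ n.divisors.erase n, toRF (critPoly d k) ^ μ (n / k) ∈
      ratiosAt c (IsUnit.submonoid R) := by
    refine prod_mem fun k hk => zpow_mem_ratiosAt not_isUnit_zero (toRF_mem_ratiosAt ?_) _
    rw [IsUnit.mem_submonoid_iff, aeval_critPoly]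
    exact hunit k (mem_of_mem_erase hk) (ne_of_mem_erase hk)
  obtain ⟨u, hu, v, hv, h⟩ := exists_aeval_mul_eq_of_mem_ratiosAt hsplit hmem
  rw [IsUnit.mem_submonoid_iff] at hu hv
  refine ⟨hv.unit * hu.unit⁻¹, ?_⟩
  rw [← aeval_critPoly, Units.val_mul, ← mul_assoc, IsUnit.unit_spec, h, mul_assoc,
    IsUnit.mul_val_inv, mul_one]

end Orbit

end Misiurewicz

open Misiurewicz

theorem orbit_eq_G0_mul_unit_general (d m n : ℕ) (hd : d.Prime) (hn : 1 ≤ n)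
    (G G0 : Polynomial ℤ) (hG : IsMisiurewicz d m n G) (hG0 : IsG0 d n G0)
    (K : Type*) [Field K] (c₀ : NumberField.RingOfIntegers K)
    (hroot : Polynomial.aeval (c₀ : K) G = 0) :
    ∃ u : (NumberField.RingOfIntegers K)ˣ,
      (fun x => x ^ d + c₀)^[n] 0 = Polynomial.aeval c₀ G0 * u := by
  have hroot' : aeval c₀ G = 0 := by
    apply FaithfulSMul.algebraMap_injective (NumberField.RingOfIntegers K) K
    rw [← aeval_algebraMap_apply, map_zero]
    exact hroot
  exact exists_iterate_eq_aeval_mul_unit (by omega) hG0 c₀ fun k hk hkn =>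
    isUnit_iterate_of_aeval_eq_zero hd.two_le hG hroot' hk hkn

/-- Let `d` be a prime, `m ≥ 2`, `n ≥ 1`, and `c₀` a root of `G_{d,m,n}`,
with `K = ℚ(c₀)` and `a_n = f_{c₀,d}^n(0) ∈ O_K`. Then `a_n = G_{d,0,n}(c₀)·u` for some
unit `u` of `O_K`. -/
theorem orbit_eq_G0_mul_unit (d m n : ℕ) (hd : d.Prime) (hm : 2 ≤ m) (hn : 1 ≤ n)
    (G G0 : Polynomial ℤ) (hG : IsMisiurewicz d m n G) (hG0 : IsG0 d n G0)
    (K : Type*) [Field K] [NumberField K] (c₀ : NumberField.RingOfIntegers K)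
    (hroot : Polynomial.aeval (c₀ : K) G = 0)
    (hgen : Algebra.adjoin ℚ {(c₀ : K)} = ⊤) :
    ∃ u : (NumberField.RingOfIntegers K)ˣ,
      (fun x => x ^ d + c₀)^[n] 0 = Polynomial.aeval c₀ G0 * u :=
  orbit_eq_G0_mul_unit_general d m n hd hn G G0 hG hG0 K c₀ hroot
end
end

section
/- Let d be a rational prime, m ≥ 2, n ≥ 1. Then G_{d,m,n}(c) ≡ G_{d,0,n}(c)^{M_{m,n}} (mod d) in ℤ[c], where M_{m,n} = d^{m−1}(d−1) if n ∤ m−1 and M_{m,n} = (d^{m−1}−1)(d−1) if n | m−1. -/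
open Polynomial

noncomputable section

/-!
Reduction modulo `d` is not defined on `ℚ(c)`, but it is on the fractions whose denominator
stays nonzero modulo `d`, and there it is multiplicative. Every factor of the Möbius products
defining `G_{d,m,n}` and `G_{d,0,n}` is such a fraction: by Frobenius,
`f^{j+k}(0) - f^j(0) ≡ (f^k(0))^{d^j} (mod d)`, and `f^k(0)` is monic. Hence both sides reduce to
powers of the reduction of `G_{d,0,n}`, with exponents `d^m - d^{m-1}` for `F_{d,m,n}` and
`d - 1` for `F_{d,1,n}`.
-/

section Reduction

variable {A B K L : Type*} [CommRing A] [CommRing B] [IsDomain B] [Field K] [Algebra A K]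
  [Field L] [Algebra B L] {φ : A →+* B}

def HasReduction (φ : A →+* B) (x : K) (y : L) : Prop :=
  ∃ a b : A, φ b ≠ 0 ∧ x = algebraMap A K a / algebraMap A K b ∧
    y = algebraMap B L (φ a) / algebraMap B L (φ b)

theorem hasReduction_algebraMap (a : A) :
    HasReduction φ (algebraMap A K a) (algebraMap B L (φ a)) :=
  ⟨a, 1, by simp, by simp, by simp⟩

theorem hasReduction_one : HasReduction φ (1 : K) (1 : L) := by
  simpa using hasReduction_algebraMap (K := K) (L := L) (φ := φ) 1

theorem HasReduction.mul {x₁ x₂ : K} {y₁ y₂ : L} (h₁ : HasReduction φ x₁ y₁)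
    (h₂ : HasReduction φ x₂ y₂) : HasReduction φ (x₁ * x₂) (y₁ * y₂) := by
  obtain ⟨a₁, b₁, hb₁, rfl, rfl⟩ := h₁
  obtain ⟨a₂, b₂, hb₂, rfl, rfl⟩ := h₂
  exact ⟨a₁ * a₂, b₁ * b₂, by simpa using ⟨hb₁, hb₂⟩, by simp [div_mul_div_comm],
    by simp [div_mul_div_comm]⟩

omit [IsDomain B] in
theorem HasReduction.inv {x : K} {y : L} (h : HasReduction φ x y) (hy : y ≠ 0) :
    HasReduction φ x⁻¹ y⁻¹ := by
  obtain ⟨a, b, hb, rfl, rfl⟩ := h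
  have ha : φ a ≠ 0 := by rintro ha; simp [ha] at hy
  exact ⟨b, a, ha, by rw [inv_div], by rw [inv_div]⟩

theorem HasReduction.div {x₁ x₂ : K} {y₁ y₂ : L} (h₁ : HasReduction φ x₁ y₁)
    (h₂ : HasReduction φ x₂ y₂) (hy₂ : y₂ ≠ 0) :
    HasReduction φ (x₁ / x₂) (y₁ / y₂) := by
  simpa only [div_eq_mul_inv] using h₁.mul (h₂.inv hy₂)

theorem HasReduction.pow {x : K} {y : L} (h : HasReduction φ x y) (n : ℕ) :
    HasReduction φ (x ^ n) (y ^ n) := by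
  induction n with
  | zero => simpa using hasReduction_one
  | succ n ih => simpa only [pow_succ] using ih.mul h

theorem HasReduction.zpow {x : K} {y : L} (h : HasReduction φ x y) (hy : y ≠ 0) (n : ℤ) :
    HasReduction φ (x ^ n) (y ^ n) := by
  cases n with
  | ofNat n => simpa only [Int.ofNat_eq_natCast, zpow_natCast] using h.pow n
  | negSucc n => simpa only [zpow_negSucc] using (h.pow (n + 1)).inv (pow_ne_zero _ hy)

theorem HasReduction.prod {ι : Type*} (s : Finset ι) {x : ι → K} {y : ι → L}
    (h : ∀ i ∈ s, HasReduction φ (x i) (y i)) :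
    HasReduction φ (∏ i ∈ s, x i) (∏ i ∈ s, y i) := by
  induction s using Finset.cons_induction with
  | empty => simpa using hasReduction_one
  | cons i s hi ih =>
    rw [Finset.prod_cons, Finset.prod_cons]
    exact (h i (Finset.mem_cons_self i s)).mul (ih fun j hj => h j (Finset.mem_cons_of_mem hj))

theorem HasReduction.unique [IsDomain A] [IsFractionRing A K] [IsFractionRing B L] {x : K}
    {y y' : L} (h : HasReduction φ x y) (h' : HasReduction φ x y') : y = y' := by
  obtain ⟨a, b, hb, rfl, rfl⟩ := h
  obtain ⟨a', b', hb', hx, rfl⟩ := h'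
  have hK : ∀ {c : A}, φ c ≠ 0 → algebraMap A K c ≠ 0 := fun hc =>
    IsFractionRing.to_map_ne_zero_of_mem_nonZeroDivisors
      (mem_nonZeroDivisors_of_ne_zero fun h => hc (by rw [h, map_zero]))
  have hL : ∀ {c : A}, φ c ≠ 0 → algebraMap B L (φ c) ≠ 0 := fun hc =>
    IsFractionRing.to_map_ne_zero_of_mem_nonZeroDivisors (mem_nonZeroDivisors_of_ne_zero hc)
  rw [div_eq_div_iff (hK hb) (hK hb'), ← map_mul, ← map_mul] at hx
  rw [div_eq_div_iff (hL hb) (hL hb'), ← map_mul, ← map_mul, ← map_mul, ← map_mul,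
    IsFractionRing.injective A K hx]

end Reduction

theorem critPoly_monic_and_natDegree_pos {d : ℕ} (hd : 2 ≤ d) :
    ∀ {k : ℕ}, 0 < k → (critPoly d k).Monic ∧ 0 < (critPoly d k).natDegree
  | 1, _ => by simp [critPoly, zero_pow (by omega : d ≠ 0)]
  | k + 2, _ => by
    obtain ⟨hmonic, hpos⟩ := critPoly_monic_and_natDegree_pos hd (Nat.succ_pos k)
    have hlt : (X : ℤ[X]).natDegree < (critPoly d (k + 1) ^ d).natDegree := by
      rw [natDegree_X, hmonic.natDegree_pow]
      nlinarith
    rw [critPoly, natDegree_add_eq_left_of_natDegree_lt hlt]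
    exact ⟨(hmonic.pow d).add_of_left (degree_lt_degree hlt), hlt.trans_le' (by omega)⟩

theorem map_critPoly_add_sub {R : Type*} [CommRing R] (d : ℕ) [ExpChar R d] (j k : ℕ) :
    (critPoly d (j + k) - critPoly d j).map (Int.castRingHom R) =
      (critPoly d k).map (Int.castRingHom R) ^ d ^ j := by
  induction j with
  | zero => simp [critPoly]
  | succ j ih =>
    rw [Nat.add_right_comm, critPoly, critPoly, add_sub_add_right_eq_sub, Polynomial.map_sub,
      Polynomial.map_pow, Polynomial.map_pow, ← sub_pow_expChar, ← Polynomial.map_sub, ih,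
      ← pow_mul, pow_succ]

section ModPrime

abbrev reduceMod (d : ℕ) : ℤ[X] →+* (ZMod d)[X] := mapRingHom (Int.castRingHom (ZMod d))

def critPolyMod (d k : ℕ) : FractionRing (ZMod d)[X] :=
  algebraMap _ _ (reduceMod d (critPoly d k))

def G0Mod (d : ℕ) [Fact d.Prime] (n : ℕ) : FractionRing (ZMod d)[X] :=
  ∏ k ∈ n.divisors, critPolyMod d k ^ ArithmeticFunction.moebius (n / k)

variable {d : ℕ} [Fact d.Prime]

theorem critPolyMod_ne_zero {k : ℕ} (hk : 0 < k) : critPolyMod d k ≠ 0 := by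
  have hmonic := ((critPoly_monic_and_natDegree_pos (Fact.out : d.Prime).two_le hk).1).map
    (Int.castRingHom (ZMod d))
  exact IsFractionRing.to_map_ne_zero_of_mem_nonZeroDivisors
    (mem_nonZeroDivisors_of_ne_zero hmonic.ne_zero)

theorem G0Mod_ne_zero (n : ℕ) : G0Mod d n ≠ 0 :=
  Finset.prod_ne_zero_iff.mpr fun _ hk =>
    zpow_ne_zero _ (critPolyMod_ne_zero (Nat.pos_of_mem_divisors hk))

theorem hasReduction_critPoly_add_sub (j k : ℕ) :
    HasReduction (reduceMod d) (toRF (critPoly d (j + k)) - toRF (critPoly d j))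
      (critPolyMod d k ^ d ^ j) := by
  have h := hasReduction_algebraMap (K := RF) (L := FractionRing (ZMod d)[X]) (φ := reduceMod d)
    (critPoly d (j + k) - critPoly d j)
  rwa [coe_mapRingHom, map_critPoly_add_sub, map_sub, map_pow] at h

theorem hasReduction_G0Rat (n : ℕ) : HasReduction (reduceMod d) (G0Rat d n) (G0Mod d n) := by
  unfold G0Rat G0Mod
  refine HasReduction.prod _ fun k hk => ?_
  exact (hasReduction_algebraMap (φ := reduceMod d) (critPoly d k)).zpow
    (critPolyMod_ne_zero (Nat.pos_of_mem_divisors hk)) _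

theorem hasReduction_FRat (m n : ℕ) :
    HasReduction (reduceMod d) (FRat d m n) (G0Mod d n ^ ((d : ℤ) ^ m - d ^ (m - 1))) := by
  rw [G0Mod, ← Finset.prod_zpow]
  refine HasReduction.prod _ fun k hk => ?_
  have hc := critPolyMod_ne_zero (d := d) (Nat.pos_of_mem_divisors hk)
  have hquot := (hasReduction_critPoly_add_sub m k).div (hasReduction_critPoly_add_sub (m - 1) k)
    (pow_ne_zero _ hc)
  rw [← zpow_natCast, ← zpow_natCast, ← zpow_sub₀ hc] at hquot
  rw [← zpow_mul, mul_comm, zpow_mul]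
  exact_mod_cast hquot.zpow (zpow_ne_zero _ hc) _

theorem hasReduction_GRat {m : ℕ} (hm : 1 ≤ m) (n : ℕ) :
    HasReduction (reduceMod d) (GRat d m n) (G0Mod d n ^
      (if n ∣ m - 1 then (d ^ (m - 1) - 1) * (d - 1) else d ^ (m - 1) * (d - 1))) := by
  obtain ⟨m, rfl⟩ : ∃ m', m = m' + 1 := ⟨m - 1, by omega⟩
  have hd : 1 ≤ d := (Fact.out : d.Prime).one_le
  rw [GRat, Nat.add_sub_cancel, ← zpow_natCast]
  split_ifs
  · have hexp : (((d ^ m - 1) * (d - 1) : ℕ) : ℤ) =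
        ((d : ℤ) ^ (m + 1) - d ^ m) - (d ^ 1 - d ^ 0) := by
      push_cast [Nat.one_le_pow m d hd, hd]
      ring
    rw [hexp, zpow_sub₀ (G0Mod_ne_zero n)]
    exact (hasReduction_FRat (m + 1) n).div (hasReduction_FRat 1 n)
      (zpow_ne_zero _ (G0Mod_ne_zero n))
  · have hexp : ((d ^ m * (d - 1) : ℕ) : ℤ) = (d : ℤ) ^ (m + 1) - d ^ m := by
      push_cast [hd]
      ring
    rw [hexp]
    exact hasReduction_FRat (m + 1) n

end ModPrime

theorem misiurewicz_congruence_mod_d_general (d m n : ℕ) (hd : d.Prime) (hm : 2 ≤ m)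
    (G G0 : Polynomial ℤ) (hG : IsMisiurewicz d m n G) (hG0 : IsG0 d n G0) :
    G.map (Int.castRingHom (ZMod d)) =
      G0.map (Int.castRingHom (ZMod d)) ^
        (if n ∣ m - 1 then (d ^ (m - 1) - 1) * (d - 1) else d ^ (m - 1) * (d - 1)) := by
  have := Fact.mk hd
  have hGmod := (hasReduction_algebraMap G).unique (hG ▸ hasReduction_GRat (by omega) n)
  have hG0mod := (hasReduction_algebraMap G0).unique (hG0 ▸ hasReduction_G0Rat n)
  apply IsFractionRing.injective (ZMod d)[X] (FractionRing (ZMod d)[X])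
  rw [map_pow]
  exact hGmod.trans (hG0mod ▸ rfl)

/-- Let `d` be a prime, `m ≥ 2`, `n ≥ 1`. Then
`G_{d,m,n} ≡ G_{d,0,n}^{M_{m,n}} (mod d)` in `ℤ[c]`, where `M_{m,n} = d^{m-1}(d-1)` if
`n ∤ m-1` and `M_{m,n} = (d^{m-1}-1)(d-1)` if `n ∣ m-1`. -/
theorem misiurewicz_congruence_mod_d (d m n : ℕ) (hd : d.Prime) (hm : 2 ≤ m) (hn : 1 ≤ n)
    (G G0 : Polynomial ℤ) (hG : IsMisiurewicz d m n G) (hG0 : IsG0 d n G0) :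
    G.map (Int.castRingHom (ZMod d)) =
      G0.map (Int.castRingHom (ZMod d)) ^
        (if n ∣ m - 1 then (d ^ (m - 1) - 1) * (d - 1) else d ^ (m - 1) * (d - 1)) :=
  misiurewicz_congruence_mod_d_general d m n hd hm G G0 hG hG0
end
end

section
/- Let p be a rational prime and let f(x) ∈ ℤ[x] be a monic polynomial (not necessarily irreducible) whose discriminant Disc(f) is relatively prime to p. Suppose the reduction f̅(x) ∈ 𝔽_p[x] factors as f̅ = f_1 ⋯ f_k with f_1, …, f_k ∈ 𝔽_p[x] irreducible. Then there exist lifts f̃_1, …, f̃_k ∈ ℤ[x] of f_1, …, f_k and a polynomial F(x) ∈ ℤ[x] such that f(x) = f̃_1(x) ⋯ f̃_k(x) + pF(x) and the resultant Res(f̃_i, F) is relatively prime to p for every 1 ≤ i ≤ k. -/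
open Polynomial

noncomputable section

/-- The Sylvester matrix of two polynomials `f, g ∈ ℤ[x]`: the first `g.natDegree` rows
carry the coefficients of `f` and the remaining `f.natDegree` rows carry the
coefficients of `g`, each shifted one step to the right in successive rows. -/
def sylvesterMatrix (f g : Polynomial ℤ) :
    Matrix (Fin (f.natDegree + g.natDegree)) (Fin (f.natDegree + g.natDegree)) ℤ :=
  Matrix.of fun i j =>
    if (i : ℕ) < g.natDegree then
      if (i : ℕ) ≤ (j : ℕ) ∧ (j : ℕ) ≤ (i : ℕ) + f.natDegree then
        f.coeff (f.natDegree - ((j : ℕ) - (i : ℕ)))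
      else 0
    else
      if (i : ℕ) - g.natDegree ≤ (j : ℕ) ∧ (j : ℕ) ≤ ((i : ℕ) - g.natDegree) + g.natDegree then
        g.coeff (g.natDegree - ((j : ℕ) - ((i : ℕ) - g.natDegree)))
      else 0

/-- The resultant of two polynomials over `ℤ`, as the determinant of their Sylvester matrix. -/
def resultantZ (f g : Polynomial ℤ) : ℤ := (sylvesterMatrix f g).det

/-- The discriminant of a monic polynomial `f ∈ ℤ[x]`:
`Disc(f) = (-1)^{deg f (deg f - 1)/2} · Res(f, f')`. -/
def discZ (f : Polynomial ℤ) : ℤ :=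
  (-1) ^ (f.natDegree * (f.natDegree - 1) / 2) * resultantZ f (Polynomial.derivative f)

/-!
Take lifts `aᵢ` of the `gᵢ` of the same degree and write `f = ∏ aᵢ + p F₀`. Replacing each `aᵢ`
by `aᵢ + p Hᵢ` changes the remainder modulo `p` to `F̄₀ - ∑ⱼ H̄ⱼ ∏_{l ≠ j} gₗ`, which modulo `gᵢ`
is `F̄₀ - H̄ᵢ ∏_{l ≠ i} gₗ`. As `p ∤ Disc f`, the reduction `f̄` is separable, so `gᵢ` is coprime
to `∏_{l ≠ i} gₗ` and `H̄ᵢ` can be chosen of degree `< deg gᵢ` with `F̄ ≡ 1 (mod gᵢ)`. The new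
lift then still has a leading coefficient prime to `p`, so `Res(g̃ᵢ, F)` reduces modulo `p` to a
unit times `Res(gᵢ, F̄) ≠ 0`.
-/

open Finset

theorem degree_C_mul_le {R : Type*} [Semiring R] (a : R) (p : R[X]) :
    (C a * p).degree ≤ p.degree := by
  simpa [smul_eq_C_mul] using degree_smul_le a p

theorem sq_dvd_prod_add_mul_sub {R ι : Type*} [CommRing R] [DecidableEq ι]
    (s : Finset ι) (x y : ι → R) (w : R) :
    w ^ 2 ∣ ∏ j ∈ s, (x j + w * y j) - (∏ j ∈ s, x j + w * ∑ j ∈ s, y j * ∏ l ∈ s.erase j, x l) := by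
  induction s using Finset.induction_on with
  | empty => simp
  | insert a s ha ih =>
    obtain ⟨E, hE⟩ := ih
    have hs : ∑ j ∈ s, y j * ∏ l ∈ (insert a s).erase j, x l
        = x a * ∑ j ∈ s, y j * ∏ l ∈ s.erase j, x l := by
      rw [Finset.mul_sum]
      refine Finset.sum_congr rfl fun j hj => ?_
      rw [Finset.erase_insert_of_ne (by rintro rfl; exact ha hj),
        Finset.prod_insert (fun hmem => ha (Finset.mem_of_mem_erase hmem))]
      ring
    refine ⟨(x a + w * y a) * E + y a * ∑ j ∈ s, y j * ∏ l ∈ s.erase j, x l, ?_⟩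
    rw [Finset.prod_insert ha, Finset.prod_insert ha, Finset.sum_insert ha, Finset.erase_insert ha,
      hs]
    linear_combination (x a + w * y a) * hE

theorem dvd_sub_sum_mul_prod_erase {R ι : Type*} [CommRing R] [DecidableEq ι] {s : Finset ι}
    {i : ι} (hi : i ∈ s) (g h : ι → R) {c : R} (hc : g i ∣ c - h i * ∏ l ∈ s.erase i, g l) :
    g i ∣ c - ∑ j ∈ s, h j * ∏ l ∈ s.erase j, g l := by
  rw [← Finset.add_sum_erase s _ hi, ← sub_sub]
  refine dvd_sub hc (Finset.dvd_sum fun j hj => dvd_mul_of_dvd_right ?_ _)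
  exact Finset.dvd_prod_of_mem _ (Finset.mem_erase.mpr ⟨(Finset.ne_of_mem_erase hj).symm, hi⟩)

theorem exists_degree_lt_dvd_sub_mul {K : Type*} [Field K] {g q : K[X]} (hg : g ≠ 0)
    (hgq : IsCoprime g q) (c : K[X]) : ∃ h, h.degree < g.degree ∧ g ∣ c - h * q := by
  obtain ⟨α, β, hαβ⟩ := hgq
  refine ⟨β * c % g, degree_mod_lt _ hg, c * α + β * c / g * q, ?_⟩
  rw [EuclideanDomain.mod_eq_sub_mul_div]
  linear_combination (-c) * hαβ

theorem C_dvd_of_map_eq_zero {R S : Type*} [CommRing R] [Semiring S] {φ : R →+* S} {π : R}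
    (hπ : RingHom.ker φ = Ideal.span {π}) {q : R[X]} (hq : q.map φ = 0) : C π ∣ q := by
  rw [C_dvd_iff_dvd_coeff]
  intro n
  rw [← Ideal.mem_span_singleton, ← hπ, RingHom.mem_ker, ← coeff_map, hq, coeff_zero]

section ResultantMod

variable {R K : Type*} [CommRing R] [Field K] (φ : R →+* K)

theorem map_resultant_ne_zero_iff {f : R[X]} (g : R[X]) (hf : φ f.leadingCoeff ≠ 0) :
    φ (f.resultant g) ≠ 0 ↔ IsCoprime (f.map φ) (g.map φ) := by
  have hdeg : (f.map φ).natDegree = f.natDegree := natDegree_map_of_leadingCoeff_ne_zero φ hf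
  have hf0 : f.map φ ≠ 0 := by
    rw [← leadingCoeff_ne_zero, leadingCoeff_map_of_leadingCoeff_ne_zero φ hf]; exact hf
  -- the reduction may lower `deg g`, which only costs a power of the leading coefficient of `f̄`
  obtain ⟨k, hk⟩ := Nat.exists_eq_add_of_le (natDegree_map_le (f := φ) (p := g))
  rw [← resultant_map_map, ← hdeg, hk, resultant_add_right_deg _ _ _ _ _ le_rfl, coeff_natDegree,
    mul_ne_zero_iff, leadingCoeff_map_of_leadingCoeff_ne_zero φ hf,
    and_iff_right (pow_ne_zero _ hf), ne_eq, resultant_eq_zero_iff]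
  tauto

theorem exists_lifts_map_resultant_ne_zero {ι : Type*} [Fintype ι] [DecidableEq ι]
    (hφ : Function.Surjective φ) {π : R} (hπ : RingHom.ker φ = Ideal.span {π}) (f : R[X])
    (g : ι → K[X]) (hsep : (∏ i, g i).Separable) (hfact : f.map φ = ∏ i, g i) :
    ∃ (gt : ι → R[X]) (F : R[X]), (∀ i, (gt i).map φ = g i) ∧ f = ∏ i, gt i + C π * F ∧
      ∀ i, φ ((gt i).resultant F) ≠ 0 := by
  have hφπ : φ π = 0 := by rw [← RingHom.mem_ker, hπ]; exact Ideal.mem_span_singleton_self π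
  have hg0 (i : ι) : g i ≠ 0 := fun h => hsep.ne_zero (Finset.prod_eq_zero (mem_univ i) h)
  have hcop (i : ι) : IsCoprime (g i) (∏ j ∈ univ.erase i, g j) := by
    rw [← Finset.mul_prod_erase _ _ (mem_univ i)] at hsep
    exact hsep.isCoprime
  choose a ha hadeg using fun i => exists_degree_eq_of_mem_lifts (map_surjective φ hφ (g i))
  obtain ⟨F₀, hF₀⟩ : C π ∣ f - ∏ i, a i :=
    C_dvd_of_map_eq_zero hπ (by simp [hfact, Polynomial.map_prod, ha])
  choose h hhdeg hhdvd using fun i => exists_degree_lt_dvd_sub_mul (hg0 i) (hcop i) (F₀.map φ - 1)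
  choose H hH hHdeg using fun i => exists_degree_eq_of_mem_lifts (map_surjective φ hφ (h i))
  obtain ⟨E, hE⟩ := sq_dvd_prod_add_mul_sub univ a H (C π)
  set F := F₀ - ∑ j, H j * ∏ l ∈ univ.erase j, a l - C π * E
  have hgt (i : ι) : (a i + C π * H i).map φ = g i := by simp [ha, hφπ]
  refine ⟨fun i => a i + C π * H i, F, hgt, by linear_combination hF₀ - hE, fun i => ?_⟩
  have hdeg : (a i + C π * H i).degree = (g i).degree := by
    rw [degree_add_eq_left_of_degree_lt, hadeg]
    calc (C π * H i).degree ≤ (H i).degree := degree_C_mul_le π (H i)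
      _ < (a i).degree := by rw [hHdeg, hadeg]; exact hhdeg i
  have hlc : φ (a i + C π * H i).leadingCoeff ≠ 0 := by
    refine (degree_map_eq_iff.mp (by rw [hgt, hdeg])).resolve_right fun h0 => hg0 i ?_
    rw [← hgt, h0, Polynomial.map_zero]
  obtain ⟨t, ht⟩ := dvd_sub_sum_mul_prod_erase (mem_univ i) g h (hhdvd i)
  have hF : F.map φ = 1 + g i * t := by
    simp only [F, Polynomial.map_sub, Polynomial.map_mul, Polynomial.map_sum, Polynomial.map_prod,
      map_C, hφπ, C_0, zero_mul, sub_zero, ha, hH]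
    linear_combination ht
  rw [map_resultant_ne_zero_iff φ F hlc, hgt, hF]
  exact isCoprime_one_right.add_mul_left_right t

end ResultantMod

theorem sylvesterMatrix_eq_submatrix_transpose (f g : ℤ[X]) :
    sylvesterMatrix f g =
      (sylvester f g f.natDegree g.natDegree).transpose.submatrix Fin.rev Fin.rev := by
  ext i j
  simp only [sylvesterMatrix, sylvester, Fin.addCases, Matrix.of_apply, Matrix.submatrix_apply,
    Matrix.transpose_apply, Set.mem_Icc, Fin.val_rev, Fin.val_castLT, Fin.val_subNat,
    Fin.val_cast, eq_rec_constant]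
  have := i.isLt
  have := j.isLt
  split_ifs <;> first | rfl | omega | (congr 1; omega)

theorem resultantZ_eq_resultant (f g : ℤ[X]) : resultantZ f g = f.resultant g := by
  rw [resultantZ, sylvesterMatrix_eq_submatrix_transpose, resultant]
  exact (Matrix.det_submatrix_equiv_self Fin.revPerm _).trans (Matrix.det_transpose _)

section ZMod

variable {p : ℕ} [Fact p.Prime]

theorem ZMod.intCast_ne_zero_iff_isCoprime (r : ℤ) : (r : ZMod p) ≠ 0 ↔ IsCoprime r p := by
  rw [isCoprime_comm, ← ZMod.coe_int_isUnit_iff_isCoprime, isUnit_iff_ne_zero]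

theorem separable_map_of_isCoprime_discZ {f : ℤ[X]} (hf : f.Monic)
    (hdisc : IsCoprime (discZ f) p) : (f.map (Int.castRingHom (ZMod p))).Separable := by
  rw [Separable, derivative_map, ← map_resultant_ne_zero_iff _ _ (by simp [hf.leadingCoeff]),
    ← resultantZ_eq_resultant]
  rw [← ZMod.intCast_ne_zero_iff_isCoprime, discZ, Int.cast_mul] at hdisc
  exact right_ne_zero_of_mul hdisc

end ZMod

theorem exists_good_lifts_general (p : ℕ) [hp : Fact p.Prime] (f : Polynomial ℤ) (hf : f.Monic)
    (hdisc : IsCoprime (discZ f) (p : ℤ))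
    (k : ℕ) (g : Fin k → Polynomial (ZMod p))
    (hfact : f.map (Int.castRingHom (ZMod p)) = ∏ i, g i) :
    ∃ (gt : Fin k → Polynomial ℤ) (F : Polynomial ℤ),
      (∀ i, (gt i).map (Int.castRingHom (ZMod p)) = g i) ∧
      f = (∏ i, gt i) + (p : Polynomial ℤ) * F ∧
      ∀ i, IsCoprime (resultantZ (gt i) F) (p : ℤ) := by
  obtain ⟨gt, F, hgt, hF, hres⟩ := exists_lifts_map_resultant_ne_zero _
    (ZMod.ringHom_surjective _) (ZMod.ker_intCastRingHom p) f g
    (hfact ▸ separable_map_of_isCoprime_discZ hf hdisc) hfact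
  refine ⟨gt, F, hgt, by rwa [← C_eq_natCast], fun i => ?_⟩
  rw [← ZMod.intCast_ne_zero_iff_isCoprime, resultantZ_eq_resultant]
  exact hres i

/-- Let `p` be a prime and `f ∈ ℤ[x]` monic with `Disc(f)` relatively
prime to `p`. If `f̅ = f_1 ⋯ f_k` in `𝔽_p[x]` with each `f_i` irreducible, then there are
lifts `f̃_i ∈ ℤ[x]` of the `f_i` and `F ∈ ℤ[x]` with `f = f̃_1 ⋯ f̃_k + p·F` such that
`Res(f̃_i, F)` is relatively prime to `p` for every `i`. -/
theorem exists_good_lifts (p : ℕ) [hp : Fact p.Prime] (f : Polynomial ℤ) (hf : f.Monic)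
    (hdisc : IsCoprime (discZ f) (p : ℤ))
    (k : ℕ) (g : Fin k → Polynomial (ZMod p)) (hgirr : ∀ i, Irreducible (g i))
    (hfact : f.map (Int.castRingHom (ZMod p)) = ∏ i, g i) :
    ∃ (gt : Fin k → Polynomial ℤ) (F : Polynomial ℤ),
      (∀ i, (gt i).map (Int.castRingHom (ZMod p)) = g i) ∧
      f = (∏ i, gt i) + (p : Polynomial ℤ) * F ∧
      ∀ i, IsCoprime (resultantZ (gt i) F) (p : ℤ) :=
  exists_good_lifts_general p (hp := hp) f hf hdisc k g hfact
end
end
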